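/- arXiv:2403.09754 — 7 statements merged into one kernel-verified Lean document; each statement's English description precedes it below -/
import Mathlib

section
/- For every positive integer n, the family of real numbers ∏_{i=1}^{n} 1/ℓ_i², indexed by strictly increasing n-tuples of positive integers 1 ≤ ℓ_1 < ℓ_2 < ... < ℓ_n (equivalently, by strictly monotone functions from Fin n to the positive integers), is summable, and its sum equals π^{2n} / (2n+1)!. -/
open Real Filter Finset Topology

noncomputable def mzvA : ℕ → ℝ := fun k => 1 / ((k : ℝ) + 1) ^ 2

lemma mzvA_nonneg (k : ℕ) : 0 ≤ mzvA k := by unfold mzvA; positivity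

lemma mzvA_summable : Summable mzvA := by
  have h : Summable (fun n : ℕ => 1 / (n : ℝ) ^ 2) :=
    summable_one_div_nat_pow.mpr one_lt_two
  have := (summable_nat_add_iff 1).mpr h
  refine this.congr fun k => ?_
  simp [mzvA]

lemma mzv_prodexp (g : ℕ → ℝ) (m : ℕ) :
    ∑ t ∈ (range m).powerset, ∏ k ∈ t, g k = ∏ k ∈ range m, (1 + g k) := by
  have h := Finset.prod_add g (fun _ => (1 : ℝ)) (range m)
  simp only [Finset.prod_const_one, mul_one] at h
  rw [← h]
  exact Finset.prod_congr rfl fun k _ => add_comm _ _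

lemma mzv_summable_prod {g : ℕ → ℝ} (hg0 : ∀ k, 0 ≤ g k) (hg : Summable g) :
    Summable (fun t : Finset ℕ => ∏ k ∈ t, g k) := by
  apply summable_of_sum_le (c := Real.exp (∑' k, g k))
  · intro t
    exact Finset.prod_nonneg fun k _ => hg0 k
  · intro u
    obtain ⟨m, hm⟩ := (u.sup id).exists_nat_subset_range
    have hsub : u ⊆ (range m).powerset := fun t ht =>
      Finset.mem_powerset.2 (le_trans (Finset.le_sup (f := id) ht) hm)
    calc ∑ t ∈ u, ∏ k ∈ t, g k
        ≤ ∑ t ∈ (range m).powerset, ∏ k ∈ t, g k :=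
          Finset.sum_le_sum_of_subset_of_nonneg hsub
            (fun t _ _ => Finset.prod_nonneg fun k _ => hg0 k)
      _ = ∏ k ∈ range m, (1 + g k) := mzv_prodexp g m
      _ ≤ ∏ k ∈ range m, Real.exp (g k) := by
          apply Finset.prod_le_prod
          · intro k _; have := hg0 k; linarith
          · intro k _; rw [add_comm]; exact Real.add_one_le_exp (g k)
      _ = Real.exp (∑ k ∈ range m, g k) := (Real.exp_sum _ _).symm
      _ ≤ Real.exp (∑' k, g k) :=
          Real.exp_le_exp.2 (Summable.sum_le_tsum _ (fun k _ => hg0 k) hg)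

lemma mzv_tendsto_powerset :
    Tendsto (fun m : ℕ => (range m).powerset) atTop atTop := by
  apply tendsto_atTop_finset_of_monotone
  · intro a b hab
    exact Finset.powerset_mono.2 (Finset.range_subset_range.2 hab)
  · intro t
    obtain ⟨m, hm⟩ := t.exists_nat_subset_range
    exact ⟨m, Finset.mem_powerset.2 hm⟩

lemma mzv_tsum_prod_eq {g : ℕ → ℝ} (hg : Summable fun t : Finset ℕ => ∏ k ∈ t, g k)
    {L : ℝ} (hL : Tendsto (fun m => ∏ k ∈ range m, (1 + g k)) atTop (𝓝 L)) :
    ∑' t : Finset ℕ, ∏ k ∈ t, g k = L := by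
  have h3 := hg.hasSum.comp mzv_tendsto_powerset
  have h4 : Tendsto (fun m => ∏ k ∈ range m, (1 + g k)) atTop
      (𝓝 (∑' t : Finset ℕ, ∏ k ∈ t, g k)) := by
    refine h3.congr fun m => ?_
    exact mzv_prodexp g m
  exact tendsto_nhds_unique h4 hL

-- (mzvA already declared)

/-- Equivalence between strictly monotone `Fin n`-tuples in ℕ and `n`-element finsets. -/
noncomputable def mzvEquiv2 (n : ℕ) :
    {f : Fin n → ℕ // StrictMono f} ≃ {t : Finset ℕ // t.card = n} where
  toFun f := ⟨Finset.image f.1 Finset.univ, by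
    rw [Finset.card_image_of_injective _ f.2.injective, Finset.card_univ, Fintype.card_fin]⟩
  invFun t := ⟨t.1.orderEmbOfFin t.2, (t.1.orderEmbOfFin t.2).strictMono⟩
  left_inv f := by
    apply Subtype.ext
    exact (Finset.orderEmbOfFin_unique _
      (fun i => Finset.mem_image_of_mem _ (Finset.mem_univ i)) f.2).symm
  right_inv t := by
    apply Subtype.ext
    rw [← Finset.coe_inj, Finset.coe_image, Finset.coe_univ, Set.image_univ]
    exact Finset.range_orderEmbOfFin t.1 t.2

/-- Equivalence between strictly monotone tuples in ℕ+ and in ℕ. -/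
def mzvEquiv1 (n : ℕ) :
    {f : Fin n → ℕ+ // StrictMono f} ≃ {f : Fin n → ℕ // StrictMono f} where
  toFun f := ⟨fun i => (f.1 i : ℕ) - 1, by
    intro i j hij
    have h : ((f.1 i : ℕ)) < ((f.1 j : ℕ)) := f.2 hij
    have h1 : 1 ≤ ((f.1 i : ℕ)) := (f.1 i).2
    show (f.1 i : ℕ) - 1 < (f.1 j : ℕ) - 1
    omega⟩
  invFun g := ⟨fun i => ⟨g.1 i + 1, Nat.succ_pos _⟩, by
    intro i j hij
    have := g.2 hij
    exact Subtype.mk_lt_mk.2 (by omega)⟩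
  left_inv f := by
    apply Subtype.ext
    funext i
    apply PNat.coe_injective
    have h1 : 1 ≤ ((f.1 i : ℕ)) := (f.1 i).2
    show (f.1 i : ℕ) - 1 + 1 = (f.1 i : ℕ)
    omega
  right_inv g := by
    apply Subtype.ext
    funext i
    show (g.1 i + 1) - 1 = g.1 i
    omega

noncomputable def mzvC (n : ℕ) : ℝ :=
    ∑' t : {t : Finset ℕ // t.card = n}, ∏ k ∈ t.1, mzvA k

lemma mzv_term_eq (n : ℕ) (f : {f : Fin n → ℕ+ // StrictMono f}) :
    ∏ i : Fin n, 1 / ((f.1 i : ℕ) : ℝ) ^ 2 =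
      ∏ k ∈ ((mzvEquiv2 n) ((mzvEquiv1 n) f)).1, mzvA k := by
  have hinj : Function.Injective ((mzvEquiv1 n) f).1 := ((mzvEquiv1 n) f).2.injective
  rw [show ((mzvEquiv2 n) ((mzvEquiv1 n) f)).1
      = Finset.image ((mzvEquiv1 n) f).1 Finset.univ from rfl]
  rw [Finset.prod_image (fun i _ j _ h => hinj h)]
  apply Finset.prod_congr rfl
  intro i _
  have h1 : 1 ≤ ((f.1 i : ℕ)) := (f.1 i).2
  have h2 : (((mzvEquiv1 n) f).1 i : ℕ) = (f.1 i : ℕ) - 1 := rfl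
  rw [h2]
  unfold mzvA
  congr 2
  have : ((f.1 i : ℕ) - 1 + 1 : ℕ) = (f.1 i : ℕ) := by omega
  rw [← this]
  push_cast
  ring

noncomputable abbrev mzvσ : (Σ n : ℕ, {t : Finset ℕ // t.card = n}) ≃ Finset ℕ :=
  Equiv.sigmaFiberEquiv Finset.card

lemma mzv_sigma_summable {r : ℝ} (hr : Summable fun t : Finset ℕ => ∏ k ∈ t, (r * mzvA k)) :
    Summable fun p : Σ n : ℕ, {t : Finset ℕ // t.card = n} => ∏ k ∈ p.2.1, (r * mzvA k) :=
  mzvσ.summable_iff.mpr hr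

lemma mzv_fiber_tsum (r : ℝ) (m : ℕ) :
    ∑' t : {t : Finset ℕ // t.card = m}, ∏ k ∈ t.1, (r * mzvA k) = r ^ m * mzvC m := by
  unfold mzvC
  rw [← tsum_mul_left]
  apply tsum_congr
  intro t
  rw [Finset.prod_mul_distrib, Finset.prod_const, t.2]

set_option maxHeartbeats 2000000 in
lemma mzv_regroup {r : ℝ} (hr : Summable fun t : Finset ℕ => ∏ k ∈ t, (r * mzvA k)) :
    (∑' t : Finset ℕ, ∏ k ∈ t, (r * mzvA k)) = ∑' m : ℕ, r ^ m * mzvC m := by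
  have hσ := mzv_sigma_summable hr
  have hcoe : ∀ p : Σ n : ℕ, {t : Finset ℕ // t.card = n}, mzvσ p = p.2.1 := fun p => rfl
  have h1 := mzvσ.tsum_eq (fun t => ∏ k ∈ t, (r * mzvA k))
  simp only [hcoe] at h1
  rw [← h1, Summable.tsum_sigma' (fun m => hσ.sigma_factor m) hσ]
  exact tsum_congr fun m => mzv_fiber_tsum r m

set_option maxHeartbeats 2000000 in
lemma mzv_summable_coeff {r : ℝ} (hr : Summable fun t : Finset ℕ => ∏ k ∈ t, (r * mzvA k)) :
    Summable fun m : ℕ => r ^ m * mzvC m := by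
  have hσ := mzv_sigma_summable hr
  exact (hσ.sigma).congr fun m => mzv_fiber_tsum r m

lemma mzv_summable_neg (x : ℝ) :
    Summable fun t : Finset ℕ => ∏ k ∈ t, (-x ^ 2 * mzvA k) := by
  have habs : Summable fun t : Finset ℕ => ∏ k ∈ t, (x ^ 2 * mzvA k) :=
    mzv_summable_prod (fun k => mul_nonneg (sq_nonneg x) (mzvA_nonneg k))
      (mzvA_summable.mul_left _)
  apply Summable.of_abs
  refine habs.congr fun t => ?_
  rw [Finset.abs_prod]
  refine Finset.prod_congr rfl fun k _ => ?_
  rw [abs_mul, abs_neg, abs_of_nonneg (sq_nonneg x), abs_of_nonneg (mzvA_nonneg k)]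

lemma mzv_euler {x : ℝ} (hx : x ≠ 0) :
    Tendsto (fun m => ∏ k ∈ range m, (1 + -x ^ 2 * mzvA k)) atTop
      (𝓝 (Real.sin (π * x) / (π * x))) := by
  have hπx : π * x ≠ 0 := mul_ne_zero Real.pi_ne_zero hx
  have h := (Real.tendsto_euler_sin_prod x).div_const (π * x)
  refine h.congr fun m => ?_
  rw [mul_div_cancel_left₀ _ hπx]
  refine Finset.prod_congr rfl fun k _ => ?_
  unfold mzvA
  ring

lemma mzv_val {x : ℝ} (hx0 : 0 < x) :
    ∑' m : ℕ, (-x ^ 2) ^ m * mzvC m = Real.sin (π * x) / (π * x) := by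
  rw [← mzv_regroup (mzv_summable_neg x)]
  exact mzv_tsum_prod_eq (mzv_summable_neg x) (mzv_euler hx0.ne')

lemma mzv_sin_series {x : ℝ} (hx : x ≠ 0) :
    HasSum (fun m : ℕ => (-1) ^ m * (π ^ (2 * m) / (Nat.factorial (2 * m + 1) : ℝ)) * x ^ (2 * m))
      (Real.sin (π * x) / (π * x)) := by
  have hπx : π * x ≠ 0 := mul_ne_zero Real.pi_ne_zero hx
  have h := (Real.hasSum_sin (π * x)).div_const (π * x)
  have hfn : (fun n : ℕ => (-1) ^ n * (π * x) ^ (2 * n + 1) / (Nat.factorial (2 * n + 1) : ℝ) / (π * x))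
      = fun n : ℕ => (-1) ^ n * (π ^ (2 * n) / (Nat.factorial (2 * n + 1) : ℝ)) * x ^ (2 * n) := by
    funext n
    have hfac : (Nat.factorial (2 * n + 1) : ℝ) ≠ 0 := Nat.cast_ne_zero.2 (Nat.factorial_ne_zero _)
    rw [pow_succ, mul_pow]
    field_simp
  rwa [hfn] at h


set_option maxHeartbeats 1000000 in
/-- If an even power series with coefficients `b` vanishes on `(0, ρ)` and is
absolutely summable at `ρ`, then all coefficients vanish. -/
lemma mzv_coeff_zero {b : ℕ → ℝ} {ρ : ℝ} (hρ : 0 < ρ)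
    (hs : Summable fun j => |b j| * ρ ^ (2 * j))
    (h0 : ∀ x : ℝ, 0 < x → x < ρ → ∑' j, b j * x ^ (2 * j) = 0) :
    ∀ j, b j = 0 := by
  have hshift : ∀ k : ℕ, Summable fun j => |b (j + k)| * ρ ^ (2 * j) := by
    intro k
    have h4 := (summable_nat_add_iff k).2 hs
    have h5 : (fun j => |b (j + k)| * ρ ^ (2 * (j + k)))
        = fun j => (|b (j + k)| * ρ ^ (2 * j)) * ρ ^ (2 * k) := by
      funext j
      rw [show 2 * (j + k) = 2 * j + 2 * k by ring, pow_add]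
      ring
    rw [h5] at h4
    exact (summable_mul_right_iff (by positivity : (ρ:ℝ) ^ (2 * k) ≠ 0)).1 h4
  intro N
  induction N using Nat.strong_induction_on with
  | _ N ih =>
  have hsx : ∀ (k : ℕ) (x : ℝ), 0 < x → x < ρ →
      Summable fun j => b (j + k) * x ^ (2 * j) := by
    intro k x hx0 hxρ
    apply Summable.of_abs
    refine (hshift k).of_nonneg_of_le (fun j => abs_nonneg _) fun j => ?_
    rw [abs_mul, abs_of_nonneg (by positivity : (0:ℝ) ≤ x ^ (2 * j))]
    exact mul_le_mul_of_nonneg_left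
      (pow_le_pow_left₀ hx0.le hxρ.le _) (abs_nonneg _)
  -- key: the tail series vanishes
  have key : ∀ x : ℝ, 0 < x → x < ρ → ∑' j, b (j + N) * x ^ (2 * j) = 0 := by
    intro x hx0 hxρ
    have hsum : Summable fun j => b j * x ^ (2 * j) := by
      simpa using hsx 0 x hx0 hxρ
    have h1 := Summable.sum_add_tsum_nat_add N hsum
    rw [h0 x hx0 hxρ] at h1
    have h2 : ∑ i ∈ range N, b i * x ^ (2 * i) = 0 :=
      Finset.sum_eq_zero fun i hi => by
        rw [ih i (Finset.mem_range.1 hi), zero_mul]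
    rw [h2, zero_add] at h1
    have h3 : (fun i => b (i + N) * x ^ (2 * (i + N)))
        = fun i => x ^ (2 * N) * (b (i + N) * x ^ (2 * i)) := by
      funext i; rw [show 2 * (i + N) = 2 * N + 2 * i by ring, pow_add]; ring
    rw [h3, tsum_mul_left] at h1
    have hxN : x ^ (2 * N) ≠ 0 := by positivity
    exact (mul_eq_zero.1 h1).resolve_left hxN
  have hshift' : Summable fun j => |b (j + 1 + N)| * ρ ^ (2 * j) := by
    have := hshift (N + 1)
    simpa only [show ∀ j : ℕ, j + (N + 1) = j + 1 + N from fun j => by omega] using this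
  set C := ∑' j, |b (j + 1 + N)| * ρ ^ (2 * j) with hC
  -- estimate |b N| ≤ C * x ^ 2 for 0 < x < ρ
  have hest : ∀ x : ℝ, 0 < x → x < ρ → |b N| ≤ C * x ^ 2 := by
    intro x hx0 hxρ
    have hsum := hsx N x hx0 hxρ
    have h1 := Summable.tsum_eq_zero_add hsum
    rw [key x hx0 hxρ] at h1
    simp only [Nat.zero_add, mul_zero, pow_zero, mul_one] at h1
    -- h1 : 0 = b N + ∑' j, b (j + 1 + N) * x ^ (2 * (j + 1))
    have hbound : ∀ j : ℕ, |b (j + 1 + N) * x ^ (2 * (j + 1))|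
        ≤ (|b (j + 1 + N)| * ρ ^ (2 * j)) * x ^ 2 := by
      intro j
      rw [abs_mul, abs_of_nonneg (by positivity : (0:ℝ) ≤ x ^ (2 * (j+1))),
        show 2 * (j + 1) = 2 * j + 2 by ring, pow_add]
      rw [mul_comm (|b (j + 1 + N)| * ρ ^ (2 * j)) (x ^ 2), ← mul_assoc, mul_comm (x^2) _,
        mul_assoc, mul_assoc]
      refine mul_le_mul_of_nonneg_left ?_ (abs_nonneg _)
      refine mul_le_mul_of_nonneg_right ?_ (by positivity)
      exact pow_le_pow_left₀ hx0.le hxρ.le _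
    have hsumabs : Summable fun j => |b (j + 1 + N) * x ^ (2 * (j + 1))| :=
      (hshift'.mul_right (x ^ 2)).of_nonneg_of_le (fun j => abs_nonneg _) hbound
    have habs : |∑' j, b (j + 1 + N) * x ^ (2 * (j + 1))|
        ≤ ∑' j, (|b (j + 1 + N)| * ρ ^ (2 * j)) * x ^ 2 := by
      calc |∑' j, b (j + 1 + N) * x ^ (2 * (j + 1))|
          ≤ ∑' j, |b (j + 1 + N) * x ^ (2 * (j + 1))| := by
            have hsumabs' : Summable fun j => ‖b (j + 1 + N) * x ^ (2 * (j + 1))‖ := hsumabs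
            exact norm_tsum_le_tsum_norm hsumabs'
        _ ≤ ∑' j, (|b (j + 1 + N)| * ρ ^ (2 * j)) * x ^ 2 :=
            Summable.tsum_le_tsum hbound hsumabs (hshift'.mul_right _)
    have hteq : ∑' j, (|b (j + 1 + N)| * ρ ^ (2 * j)) * x ^ 2 = C * x ^ 2 := by
      rw [tsum_mul_right]
    rw [hteq] at habs
    have hbn : b N = -∑' j, b (j + 1 + N) * x ^ (2 * (j + 1)) := by linarith
    rw [hbn, abs_neg]
    exact habs
  -- conclude
  have hlim : Tendsto (fun x : ℝ => C * x ^ 2) (𝓝[>] (0:ℝ)) (𝓝 0) := by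
    have h : Tendsto (fun x : ℝ => C * x ^ 2) (𝓝 (0:ℝ)) (𝓝 (C * 0 ^ 2)) :=
      (continuous_const.mul (continuous_pow 2)).tendsto 0
    simp only [ne_eq, OfNat.ofNat_ne_zero, not_false_eq_true, zero_pow, mul_zero] at h
    exact h.mono_left nhdsWithin_le_nhds
  have hev : ∀ᶠ x in 𝓝[>] (0:ℝ), |b N| ≤ C * x ^ 2 := by
    filter_upwards [Ioo_mem_nhdsGT_of_mem (by simp [hρ] : (0:ℝ) ∈ Set.Ico 0 ρ)] with x hx
    exact hest x hx.1 hx.2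
  have hfin : |b N| ≤ 0 := ge_of_tendsto hlim hev
  exact abs_nonpos_iff.1 hfin


lemma mzvC_nonneg (m : ℕ) : 0 ≤ mzvC m :=
  tsum_nonneg fun t => Finset.prod_nonneg fun k _ => mzvA_nonneg k

lemma mzvC_eq (m : ℕ) : mzvC m = π ^ (2 * m) / (Nat.factorial (2 * m + 1) : ℝ) := by
  set v : ℕ → ℝ := fun j => π ^ (2 * j) / (Nat.factorial (2 * j + 1) : ℝ) with hv
  set b : ℕ → ℝ := fun j => (-1) ^ j * mzvC j - (-1) ^ j * v j with hb
  have hv_nonneg : ∀ j, 0 ≤ v j := fun j => by positivity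
  -- summability of |b j| * (1/4)^(2j)
  have hsum1 : Summable fun j : ℕ => mzvC j * (1/4 : ℝ) ^ (2 * j) := by
    have h := mzv_summable_coeff (r := (1/4 : ℝ)^2)
      (mzv_summable_prod (fun k => mul_nonneg (by norm_num) (mzvA_nonneg k))
        (mzvA_summable.mul_left _))
    refine h.congr fun j => ?_
    rw [← pow_mul, mul_comm]
  have hsum2 : Summable fun j : ℕ => v j * (1/4 : ℝ) ^ (2 * j) := by
    refine Summable.of_nonneg_of_le (fun j => by positivity) (fun j => ?_)
      (summable_geometric_of_lt_one (r := (π/4)^2) (by positivity) ?_)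
    · have h1 : ((π/4 : ℝ)^2) ^ j = (π ^ (2*j)) * (1/4 : ℝ) ^ (2 * j) := by
        rw [← pow_mul, div_pow, one_div, inv_pow, ← div_eq_mul_inv]
      rw [h1, hv]
      have hfac : (1 : ℝ) ≤ (Nat.factorial (2 * j + 1) : ℝ) :=
        Nat.one_le_cast.2 (Nat.one_le_iff_ne_zero.2 (Nat.factorial_ne_zero _))
      have hπ : (0:ℝ) ≤ π ^ (2*j) := by positivity
      have h4 : (0:ℝ) ≤ (1/4 : ℝ) ^ (2*j) := by positivity
      calc π ^ (2 * j) / (Nat.factorial (2 * j + 1) : ℝ) * (1/4) ^ (2 * j)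
          ≤ π ^ (2 * j) / 1 * (1/4) ^ (2 * j) := by
            apply mul_le_mul_of_nonneg_right _ h4
            exact div_le_div_of_nonneg_left hπ (by norm_num) hfac
        _ = π ^ (2 * j) * (1/4) ^ (2 * j) := by rw [div_one]
    · have := Real.pi_lt_d2
      nlinarith [Real.pi_pos]
  have hbs : Summable fun j => |b j| * (1/4 : ℝ) ^ (2 * j) := by
    refine Summable.of_nonneg_of_le (fun j => by positivity) (fun j => ?_) (hsum1.add hsum2)
    have h1 : |b j| ≤ mzvC j + v j := by
      rw [hb]
      calc |(-1:ℝ) ^ j * mzvC j - (-1) ^ j * v j|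
          ≤ |(-1:ℝ) ^ j * mzvC j| + |(-1:ℝ) ^ j * v j| := abs_sub _ _
        _ = mzvC j + v j := by
            rw [abs_mul, abs_mul, abs_pow, abs_neg, abs_one, one_pow, one_mul, one_mul,
              abs_of_nonneg (mzvC_nonneg j), abs_of_nonneg (hv_nonneg j)]
    calc |b j| * (1/4 : ℝ) ^ (2*j) ≤ (mzvC j + v j) * (1/4 : ℝ) ^ (2*j) :=
          mul_le_mul_of_nonneg_right h1 (by positivity)
      _ = mzvC j * (1/4:ℝ) ^ (2*j) + v j * (1/4:ℝ) ^ (2*j) := by ring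
  have h0 : ∀ x : ℝ, 0 < x → x < (1/4 : ℝ) → ∑' j, b j * x ^ (2 * j) = 0 := by
    intro x hx0 hx4
    have s1 : Summable fun j : ℕ => (-1:ℝ) ^ j * mzvC j * x ^ (2 * j) := by
      refine (mzv_summable_coeff (mzv_summable_neg x)).congr fun j => ?_
      rw [show (-x^2 : ℝ) = (-1) * x^2 by ring, mul_pow, ← pow_mul, mul_comm 2 j]
      ring
    have s2 : Summable fun j : ℕ => (-1:ℝ) ^ j * v j * x ^ (2 * j) :=
      ((mzv_sin_series hx0.ne').summable).congr fun j => by rw [hv]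
    have e1 : ∑' j : ℕ, (-1:ℝ) ^ j * mzvC j * x ^ (2 * j) = Real.sin (π * x) / (π * x) := by
      rw [← mzv_val hx0]
      refine tsum_congr fun j => ?_
      rw [show (-x^2 : ℝ) = (-1) * x^2 by ring, mul_pow, ← pow_mul, mul_comm 2 j]
      ring
    have e2 : ∑' j : ℕ, (-1:ℝ) ^ j * v j * x ^ (2 * j) = Real.sin (π * x) / (π * x) := by
      rw [← (mzv_sin_series hx0.ne').tsum_eq]
      all_goals exact tsum_congr fun j => by rw [hv]
    have hfn : (fun j => b j * x ^ (2 * j))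
        = fun j => (-1:ℝ) ^ j * mzvC j * x ^ (2 * j) - (-1:ℝ) ^ j * v j * x ^ (2 * j) := by
      funext j; rw [hb]; ring
    rw [hfn, Summable.tsum_sub s1 s2, e1, e2, sub_self]
  have hz := mzv_coeff_zero (by norm_num : (0:ℝ) < 1/4) hbs h0 m
  have hz2 : (-1:ℝ) ^ m * (mzvC m - v m) = 0 := by rw [hb] at hz; ring_nf; ring_nf at hz; linarith
  have h3 := (mul_eq_zero.1 hz2).resolve_left (pow_ne_zero m (by norm_num : (-1:ℝ) ≠ 0))
  have : mzvC m = v m := by linarith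
  rw [this]

set_option maxHeartbeats 1000000 in
theorem stmt_6 (n : ℕ) (hn : 0 < n) :
    Summable (fun ℓ : {f : Fin n → ℕ+ // StrictMono f} =>
        ∏ i : Fin n, 1 / ((ℓ.1 i : ℕ) : ℝ) ^ 2) ∧
      ∑' ℓ : {f : Fin n → ℕ+ // StrictMono f},
          ∏ i : Fin n, 1 / ((ℓ.1 i : ℕ) : ℝ) ^ 2 =
        π ^ (2 * n) / (Nat.factorial (2 * n + 1) : ℝ) := by
  classical
  have hfib : Summable fun t : {t : Finset ℕ // t.card = n} => ∏ k ∈ t.1, mzvA k :=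
    (mzv_summable_prod mzvA_nonneg mzvA_summable).comp_injective Subtype.coe_injective
  have hterm : ∀ ℓ : {f : Fin n → ℕ+ // StrictMono f},
      ∏ i : Fin n, 1 / ((ℓ.1 i : ℕ) : ℝ) ^ 2
        = ∏ k ∈ (((mzvEquiv1 n).trans (mzvEquiv2 n)) ℓ).1, mzvA k := by
    intro ℓ
    rw [Equiv.trans_apply]
    exact mzv_term_eq n ℓ
  constructor
  · have h := ((mzvEquiv1 n).trans (mzvEquiv2 n)).summable_iff.mpr hfib
    exact h.congr fun ℓ => (hterm ℓ).symm
  · have h1 : ∑' ℓ : {f : Fin n → ℕ+ // StrictMono f},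
        ∏ i : Fin n, 1 / ((ℓ.1 i : ℕ) : ℝ) ^ 2
        = ∑' ℓ : {f : Fin n → ℕ+ // StrictMono f},
            (fun t : {t : Finset ℕ // t.card = n} => ∏ k ∈ t.1, mzvA k)
              (((mzvEquiv1 n).trans (mzvEquiv2 n)) ℓ) := tsum_congr hterm
    rw [h1, ((mzvEquiv1 n).trans (mzvEquiv2 n)).tsum_eq
      (fun t : {t : Finset ℕ // t.card = n} => ∏ k ∈ t.1, mzvA k)]
    exact mzvC_eq n
end

section
/- The iterated sum Σ_{ℓ_2 = 2}^{∞} ( Σ_{ℓ_1 = 1}^{ℓ_2 - 1} 1/(ℓ_1² · ℓ_2²) ) converges and equals π⁴ / 5! = π⁴/120. -/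
open Real

set_option maxHeartbeats 1000000 in
theorem stmt_7 :
    Summable (fun ℓ₂ : {m : ℕ // 2 ≤ m} =>
        ∑ ℓ₁ ∈ Finset.Icc 1 ((ℓ₂ : ℕ) - 1),
          1 / ((ℓ₁ : ℝ) ^ 2 * ((ℓ₂ : ℕ) : ℝ) ^ 2)) ∧
      ∑' ℓ₂ : {m : ℕ // 2 ≤ m},
          ∑ ℓ₁ ∈ Finset.Icc 1 ((ℓ₂ : ℕ) - 1),
            1 / ((ℓ₁ : ℝ) ^ 2 * ((ℓ₂ : ℕ) : ℝ) ^ 2) =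
        π ^ 4 / 120 := by
  classical
  set h : ℕ → ℝ := fun n => 1 / (n : ℝ) ^ 2 with hh
  have h2 : HasSum h (π ^ 2 / 6) := hasSum_zeta_two
  have h4 : HasSum (fun n : ℕ => (1 : ℝ) / (n : ℝ) ^ 4) (π ^ 4 / 90) := hasSum_zeta_four
  have hnn : ∀ n, 0 ≤ h n := fun n => by positivity
  set G : ℕ × ℕ → ℝ := fun p => h p.1 * h p.2 with hGdef
  have hGsummable : Summable G :=
    h2.summable.mul_of_nonneg h2.summable hnn hnn
  have hGnn : ∀ p, 0 ≤ G p := fun p => mul_nonneg (hnn _) (hnn _)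
  have hG : HasSum G (π ^ 2 / 6 * (π ^ 2 / 6)) := h2.mul h2 hGsummable
  set F : ℕ × ℕ → ℝ := fun p => if p.2 < p.1 then h p.1 * h p.2 else 0 with hFdef
  set D : ℕ × ℕ → ℝ := fun p => if p.1 = p.2 then h p.1 * h p.2 else 0 with hDdef
  have hFle : ∀ p, F p ≤ G p := by
    intro p; simp only [hFdef, hGdef]
    split
    · exact le_rfl
    · exact hGnn p
  have hFnn : ∀ p, 0 ≤ F p := by
    intro p; simp only [hFdef]; split
    · exact hGnn p
    · exact le_rfl
  have hDle : ∀ p, D p ≤ G p := by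
    intro p; simp only [hDdef, hGdef]
    split
    · exact le_rfl
    · exact hGnn p
  have hDnn : ∀ p, 0 ≤ D p := by
    intro p; simp only [hDdef]; split
    · exact hGnn p
    · exact le_rfl
  have hFsummable : Summable F := Summable.of_nonneg_of_le hFnn hFle hGsummable
  have hDsummable : Summable D := Summable.of_nonneg_of_le hDnn hDle hGsummable
  -- sum of the swapped copy
  have hFswap : Summable (fun p : ℕ × ℕ => F p.swap) :=
    ((Equiv.prodComm ℕ ℕ).summable_iff.mpr hFsummable)
  have hswap_eq : (∑' p : ℕ × ℕ, F p.swap) = ∑' p, F p :=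
    (Equiv.prodComm ℕ ℕ).tsum_eq F
  -- diagonal sum
  have hDval : (∑' p : ℕ × ℕ, D p) = π ^ 4 / 90 := by
    have hinj : Function.Injective (fun n : ℕ => ((n, n) : ℕ × ℕ)) := by
      intro a b hab; exact congrArg Prod.fst hab
    have hsupp : Function.support D ⊆ Set.range (fun n : ℕ => ((n, n) : ℕ × ℕ)) := by
      intro p hp
      by_cases hpd : p.1 = p.2
      · exact ⟨p.1, by simp [Prod.ext_iff, hpd]⟩
      · exfalso; apply hp; simp [hDdef, hpd]
    have := hinj.tsum_eq hsupp
    rw [← this]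
    have : (fun n : ℕ => D (n, n)) = fun n : ℕ => (1 : ℝ) / (n : ℝ) ^ 4 := by
      funext n
      simp only [hDdef, if_pos rfl, hh]
      rw [div_mul_div_comm, one_mul, ← pow_add]
    rw [this, h4.tsum_eq]
  -- decomposition
  have hdecomp : ∀ p : ℕ × ℕ, G p = F p + D p + F p.swap := by
    rintro ⟨a, b⟩
    simp only [hFdef, hDdef, hGdef, Prod.swap]
    rcases lt_trichotomy a b with hab | hab | hab
    · rw [if_neg (by omega), if_neg (by omega), if_pos hab]
      ring
    · rw [if_neg (by omega), if_pos hab, if_neg (by omega), hab]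
      ring
    · rw [if_pos hab, if_neg (by omega), if_neg (by omega)]
      ring
  have htotal : π ^ 2 / 6 * (π ^ 2 / 6) = (∑' p, F p) + π ^ 4 / 90 + (∑' p, F p) := by
    have : (∑' p : ℕ × ℕ, G p) = (∑' p, F p) + (∑' p, D p) + (∑' p : ℕ × ℕ, F p.swap) := by
      calc (∑' p : ℕ × ℕ, G p) = ∑' p : ℕ × ℕ, (F p + D p + F p.swap) := by
            exact tsum_congr hdecomp
        _ = (∑' p, F p) + (∑' p, D p) + (∑' p : ℕ × ℕ, F p.swap) := by
            rw [Summable.tsum_add (hFsummable.add hDsummable) hFswap, Summable.tsum_add hFsummable hDsummable]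
    rw [← hG.tsum_eq, this, hDval, hswap_eq]
  have hFval : (∑' p, F p) = π ^ 4 / 120 := by nlinarith [htotal]
  -- relate to the iterated sum
  set g : ℕ → ℝ := fun b => ∑ ℓ₁ ∈ Finset.Icc 1 (b - 1),
      1 / ((ℓ₁ : ℝ) ^ 2 * (b : ℝ) ^ 2) with hgdef
  have hinner : ∀ b : ℕ, (∑' a : ℕ, F (b, a)) = g b := by
    intro b
    rw [tsum_eq_sum (s := Finset.Icc 1 (b - 1)) ?_]
    · apply Finset.sum_congr rfl
      intro a ha
      simp only [Finset.mem_Icc] at ha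
      have hab : a < b := by omega
      simp only [hFdef, if_pos hab, hh, hgdef]
      rw [div_mul_div_comm, one_mul, mul_comm]
    · intro a ha
      simp only [Finset.mem_Icc, not_and_or, not_le] at ha
      simp only [hFdef]
      rcases ha with ha | ha
      · interval_cases a
        simp [hh]
      · rw [if_neg (by omega)]
  have hgsummable : Summable g := by
    have := hFsummable.prod
    exact (summable_congr hinner).mp this
  have hgtsum : (∑' b : ℕ, g b) = π ^ 4 / 120 := by
    rw [← tsum_congr hinner, ← Summable.tsum_prod hFsummable, hFval]
  have hg0 : ∀ b : ℕ, b ∉ Set.range ((↑) : {m : ℕ // 2 ≤ m} → ℕ) → g b = 0 := by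
    intro b hb
    have : ¬ 2 ≤ b := by
      intro h2b; exact hb ⟨⟨b, h2b⟩, rfl⟩
    have : b - 1 = 0 := by omega
    simp [hgdef, this]
  constructor
  · exact hgsummable.subtype _
  · have hinj : Function.Injective ((↑) : {m : ℕ // 2 ≤ m} → ℕ) := Subtype.val_injective
    have hsupp : Function.support g ⊆ Set.range ((↑) : {m : ℕ // 2 ≤ m} → ℕ) := by
      intro b hb
      by_contra hbr
      exact hb (hg0 b hbr)
    have := hinj.tsum_eq hsupp
    calc (∑' ℓ₂ : {m : ℕ // 2 ≤ m}, g (ℓ₂ : ℕ)) = ∑' b : ℕ, g b := this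
      _ = π ^ 4 / 120 := hgtsum
end

section
/- The iterated sum Σ_{ℓ_3 = 3}^{∞} ( Σ_{ℓ_2 = 2}^{ℓ_3 - 1} ( Σ_{ℓ_1 = 1}^{ℓ_2 - 1} 1/(ℓ_1² · ℓ_2² · ℓ_3²) ) ) converges and equals π⁶ / 7! = π⁶/5040. -/
/-!
The partial sums of the triple sum are the third elementary symmetric function `e₃` of
`1/1², 1/2², …, 1/N²`. Newton's identity `6 e₃ = p₁³ - 3 p₁ p₂ + 2 p₃` writes them through the
power sums, which converge to `ζ(2) = π²/6`, `ζ(4) = π⁴/90` and `ζ(6) = π⁶/945`; since the terms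
are nonnegative, the limit of the partial sums is the sum, namely
`(π⁶/216 - π⁶/180 + 2π⁶/945) / 6 = π⁶/5040`.
-/

open Real Finset

theorem bernoulli'_six : bernoulli' 6 = 1 / 42 := by
  rw [bernoulli'_def]
  norm_num [sum_range_succ, bernoulli'_four, bernoulli'_eq_zero_of_odd (n := 5) (by decide),
    Nat.choose]

theorem hasSum_zeta_six : HasSum (fun n : ℕ => (1 : ℝ) / (n : ℝ) ^ 6) (π ^ 6 / 945) := by
  convert hasSum_zeta_nat (k := 3) (by norm_num) using 1
  rw [bernoulli_eq_bernoulli'_of_ne_one (by decide), bernoulli'_six]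
  norm_num [Nat.factorial]
  ring

section Newton

variable {R : Type*} [CommRing R] (x : ℕ → R)

theorem two_mul_sum_range_sum_range_mul (n : ℕ) :
    2 * ∑ j ∈ range n, ∑ i ∈ range j, x i * x j =
      (∑ i ∈ range n, x i) ^ 2 - ∑ i ∈ range n, x i ^ 2 := by
  induction n with
  | zero => simp
  | succ n ih =>
    rw [sum_range_succ, ← sum_mul, sum_range_succ, sum_range_succ]
    linear_combination ih

theorem six_mul_sum_range_sum_range_sum_range_mul (n : ℕ) :
    6 * ∑ k ∈ range n, ∑ j ∈ range k, ∑ i ∈ range j, x i * x j * x k =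
      (∑ i ∈ range n, x i) ^ 3 - 3 * (∑ i ∈ range n, x i) * ∑ i ∈ range n, x i ^ 2 +
        2 * ∑ i ∈ range n, x i ^ 3 := by
  induction n with
  | zero => simp
  | succ n ih =>
    have hlast : ∑ j ∈ range n, ∑ i ∈ range j, x i * x j * x n =
        (∑ j ∈ range n, ∑ i ∈ range j, x i * x j) * x n := by
      simp only [sum_mul]
    rw [sum_range_succ, hlast, sum_range_succ, sum_range_succ, sum_range_succ]
    linear_combination ih + 3 * x n * two_mul_sum_range_sum_range_mul x n

end Newton

theorem hasSum_sum_range_sum_range_mul {x : ℕ → ℝ} (hx : ∀ n, 0 ≤ x n) {a b c : ℝ}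
    (ha : HasSum x a) (hb : HasSum (fun n => x n ^ 2) b) (hc : HasSum (fun n => x n ^ 3) c) :
    HasSum (fun k => ∑ j ∈ range k, ∑ i ∈ range j, x i * x j * x k)
      ((a ^ 3 - 3 * a * b + 2 * c) / 6) := by
  refine (hasSum_iff_tendsto_nat_of_nonneg (fun k => sum_nonneg fun j _ => sum_nonneg fun i _ =>
    mul_nonneg (mul_nonneg (hx i) (hx j)) (hx k)) _).2 ?_
  have h := ((ha.tendsto_sum_nat.pow 3).sub
    ((ha.tendsto_sum_nat.const_mul 3).mul hb.tendsto_sum_nat)).add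
    (hc.tendsto_sum_nat.const_mul 2) |>.div_const 6
  refine h.congr fun n => ?_
  rw [← six_mul_sum_range_sum_range_sum_range_mul]
  ring

/-- The multiple zeta value `ζ(2, 2, 2)`; the terms with `i = 0` vanish because `1 / 0 = 0`. -/
theorem hasSum_zeta_two_two_two :
    HasSum (fun k : ℕ => ∑ j ∈ range k, ∑ i ∈ range j,
      1 / (i : ℝ) ^ 2 * (1 / (j : ℝ) ^ 2) * (1 / (k : ℝ) ^ 2)) (π ^ 6 / 5040) := by
  convert hasSum_sum_range_sum_range_mul (fun n => by positivity) hasSum_zeta_two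
    (by simpa [div_pow, ← pow_mul] using hasSum_zeta_four)
    (by simpa [div_pow, ← pow_mul] using hasSum_zeta_six) using 1
  ring

theorem sum_Icc_sub_one_eq_sum_range {M : Type*} [AddCommMonoid M] {f : ℕ → M} {a : ℕ}
    (ha : 0 < a) (hf : ∀ i < a, f i = 0) (n : ℕ) :
    ∑ i ∈ Icc a (n - 1), f i = ∑ i ∈ range n, f i := by
  refine sum_subset (fun i hi => ?_) (fun i hi hi' => hf i ?_) <;>
    simp only [mem_Icc, mem_range, not_and_or, not_le] at * <;> omega

theorem stmt_8 :
    Summable (fun ℓ₃ : {m : ℕ // 3 ≤ m} =>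
        ∑ ℓ₂ ∈ Finset.Icc 2 ((ℓ₃ : ℕ) - 1), ∑ ℓ₁ ∈ Finset.Icc 1 (ℓ₂ - 1),
          1 / ((ℓ₁ : ℝ) ^ 2 * (ℓ₂ : ℝ) ^ 2 * ((ℓ₃ : ℕ) : ℝ) ^ 2)) ∧
      ∑' ℓ₃ : {m : ℕ // 3 ≤ m},
          ∑ ℓ₂ ∈ Finset.Icc 2 ((ℓ₃ : ℕ) - 1), ∑ ℓ₁ ∈ Finset.Icc 1 (ℓ₂ - 1),
            1 / ((ℓ₁ : ℝ) ^ 2 * (ℓ₂ : ℝ) ^ 2 * ((ℓ₃ : ℕ) : ℝ) ^ 2) =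
        π ^ 6 / 5040 := by
  set F : ℕ → ℝ := fun k => ∑ j ∈ Icc 2 (k - 1), ∑ i ∈ Icc 1 (j - 1),
    1 / ((i : ℝ) ^ 2 * (j : ℝ) ^ 2 * (k : ℝ) ^ 2)
  have hF : HasSum F (π ^ 6 / 5040) := by
    convert hasSum_zeta_two_two_two using 2 with k
    simp only [F, div_mul_div_comm, one_mul]
    rw [sum_Icc_sub_one_eq_sum_range two_pos (fun j hj => by interval_cases j <;> simp)]
    exact sum_congr rfl fun j _ => sum_Icc_sub_one_eq_sum_range one_pos (by simp) j
  have hsupp : Function.support F ⊆ {m | 3 ≤ m} := fun k hk => by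
    by_contra hk3
    exact hk (by simp [F, Icc_eq_empty_of_lt (show k - 1 < 2 by simp at hk3; omega)])
  have h := (hasSum_subtype_iff_of_support_subset hsupp).2 hF
  exact ⟨h.summable, h.tsum_eq⟩
end

section
/- The iterated sum Σ_{ℓ_5 = 5}^{∞} ( Σ_{ℓ_4 = 4}^{ℓ_5 - 1} ( Σ_{ℓ_3 = 3}^{ℓ_4 - 1} ( Σ_{ℓ_2 = 2}^{ℓ_3 - 1} ( Σ_{ℓ_1 = 1}^{ℓ_2 - 1} 1/(ℓ_1² · ℓ_2² · ℓ_3² · ℓ_4² · ℓ_5²) ) ) ) ) converges and equals π^{10} / 11!. -/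
/-! The truncations `esymmInvSq n N = e_n(1/1², …, 1/N²)` are the coefficients of the polynomial
`∏_{k ≤ N} (1 + u/k²)` in `u`. They increase to `ζ({2}^n) ≤ 2ⁿ`, so by dominated convergence
Euler's product `sin (π x) / (π x) = ∏ (1 - x²/k²)` becomes `∑ ζ({2}^n) uⁿ = sin (π x) / (π x)` for
small `u = -x²`. The Taylor series of `sin` writes the same function as `∑ π^(2n)/(2n+1)! uⁿ`, and
the identity theorem for power series gives `ζ({2}^n) = π^(2n)/(2n+1)!`. The sum of the statement
is `ζ({2}^5)`, whose terms with `ℓ₅ < 5` vanish. -/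

open Real Filter Topology Finset FormalMultilinearSeries
open scoped Nat

section PowerSeries

variable {𝕜 : Type*} [NontriviallyNormedField 𝕜]

theorem radius_ofScalars_pos_of_norm_le_pow {a : ℕ → 𝕜} {C : ℝ} (h : ∀ n, ‖a n‖ ≤ C ^ n) :
    0 < (ofScalars 𝕜 a).radius := by
  have hC : 0 ≤ C := (norm_nonneg _).trans (by simpa using h 1)
  set r : NNReal := ⟨(C + 1)⁻¹, by positivity⟩
  have hr : (r : ℝ) = (C + 1)⁻¹ := rfl
  refine lt_of_lt_of_le ?_ (le_radius_of_bound _ 1 (r := r) fun n => ?_)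
  · exact ENNReal.coe_pos.2 (NNReal.coe_pos.1 (by rw [hr]; positivity))
  · rw [ofScalars_norm, hr]
    calc ‖a n‖ * (C + 1)⁻¹ ^ n ≤ C ^ n * (C + 1)⁻¹ ^ n := by gcongr; exact h n
      _ = (C / (C + 1)) ^ n := by rw [div_eq_mul_inv, mul_pow]
      _ ≤ 1 := pow_le_one₀ (by positivity) ((div_le_one (by positivity)).2 (by linarith))

theorem eq_of_frequently_tsum_mul_pow_eq [CompleteSpace 𝕜] {a b : ℕ → 𝕜}
    (ha : 0 < (ofScalars 𝕜 a).radius) (hb : 0 < (ofScalars 𝕜 b).radius)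
    (h : ∃ᶠ z in 𝓝[≠] 0, ∑' n, a n * z ^ n = ∑' n, b n * z ^ n) : a = b := by
  have hpa := ((ofScalars 𝕜 a).hasFPowerSeriesOnBall ha).hasFPowerSeriesAt
  have hpb := ((ofScalars 𝕜 b).hasFPowerSeriesOnBall hb).hasFPowerSeriesAt
  refine ofScalars_series_injective 𝕜 (E := 𝕜) (hpa.eq_formalMultilinearSeries_of_eventually hpb ?_)
  refine (hpa.analyticAt.frequently_eq_iff_eventually_eq hpb.analyticAt).mp ?_
  simpa [FormalMultilinearSeries.sum, ofScalars_apply_eq, mul_comm] using h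

end PowerSeries

/-- `esymmInvSq n N = ∑_{1 ≤ ℓ₁ < ⋯ < ℓₙ ≤ N} 1 / (ℓ₁ ⋯ ℓₙ)²`; the recursion splits off the
largest index `ℓ = ℓₙ`. -/
noncomputable def esymmInvSq : ℕ → ℕ → ℝ
  | 0, _ => 1
  | n + 1, N => ∑ ℓ ∈ Icc 1 N, esymmInvSq n (ℓ - 1) / (ℓ : ℝ) ^ 2

namespace esymmInvSq

@[simp] theorem zero_left (N : ℕ) : esymmInvSq 0 N = 1 := rfl

theorem succ_left (n N : ℕ) :
    esymmInvSq (n + 1) N = ∑ ℓ ∈ Icc 1 N, esymmInvSq n (ℓ - 1) / (ℓ : ℝ) ^ 2 := rfl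

theorem nonneg (n N : ℕ) : 0 ≤ esymmInvSq n N := by
  induction n generalizing N with
  | zero => simp
  | succ n ih => exact sum_nonneg fun ℓ _ => div_nonneg (ih _) (sq_nonneg _)

theorem eq_zero_of_lt {n N : ℕ} (h : N < n) : esymmInvSq n N = 0 := by
  induction n generalizing N with
  | zero => omega
  | succ n ih =>
    refine sum_eq_zero fun ℓ hℓ => ?_
    rw [ih (by grind), zero_div]

theorem succ_succ (n N : ℕ) :
    esymmInvSq (n + 1) (N + 1) = esymmInvSq (n + 1) N + esymmInvSq n N / ((N : ℝ) + 1) ^ 2 := by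
  simp [succ_left, sum_Icc_succ_top]

theorem monotone (n : ℕ) : Monotone (esymmInvSq n) := by
  cases n with
  | zero => exact fun _ _ _ => le_rfl
  | succ n =>
    refine monotone_nat_of_le_succ fun N => ?_
    rw [succ_succ]
    exact le_add_of_nonneg_right (div_nonneg (nonneg _ _) (by positivity))

theorem le_two_pow (n N : ℕ) : esymmInvSq n N ≤ 2 ^ n := by
  induction n generalizing N with
  | zero => simp
  | succ n ih =>
    have hbasel : ∑ ℓ ∈ Icc 1 N, ((ℓ : ℝ) ^ 2)⁻¹ ≤ 2 := by
      have hIoo : Ioo 0 (N + 1) = Icc 1 N := by ext; simp only [mem_Ioo, mem_Icc]; omega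
      simpa [hIoo] using sum_Ioo_inv_sq_le (α := ℝ) 0 (N + 1)
    calc esymmInvSq (n + 1) N ≤ ∑ ℓ ∈ Icc 1 N, 2 ^ n * ((ℓ : ℝ) ^ 2)⁻¹ :=
          sum_le_sum fun ℓ _ => by rw [div_eq_mul_inv]; gcongr; exact ih _
      _ ≤ 2 ^ (n + 1) := by rw [← mul_sum, pow_succ]; gcongr

theorem sum_Icc_div_sq (n M : ℕ) :
    ∑ ℓ ∈ Icc (n + 1) M, esymmInvSq n (ℓ - 1) / (ℓ : ℝ) ^ 2 = esymmInvSq (n + 1) M := by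
  refine sum_subset (Icc_subset_Icc_left (by omega)) fun ℓ h₁ h₂ => ?_
  rw [eq_zero_of_lt (by grind), zero_div]

theorem prod_one_add_div_sq (u : ℝ) (N : ℕ) :
    ∏ k ∈ Icc 1 N, (1 + u / (k : ℝ) ^ 2) = ∑ n ∈ range (N + 1), esymmInvSq n N * u ^ n := by
  induction N with
  | zero => simp
  | succ N ih =>
    have hshift : ∑ n ∈ range (N + 1), esymmInvSq (n + 1) N * u ^ (n + 1) + 1 =
        ∑ n ∈ range (N + 1), esymmInvSq n N * u ^ n := by
      have h := sum_range_succ' (fun n => esymmInvSq n N * u ^ n) (N + 1)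
      rw [sum_range_succ, eq_zero_of_lt N.lt_succ_self] at h
      simpa using h.symm
    rw [prod_Icc_succ_top (by omega), ih, sum_range_succ' _ (N + 1)]
    have hmul : ∑ n ∈ range (N + 1), esymmInvSq n N / ((N : ℝ) + 1) ^ 2 * u ^ (n + 1) =
        (∑ n ∈ range (N + 1), esymmInvSq n N * u ^ n) * (u / ((N + 1 : ℕ) : ℝ) ^ 2) := by
      rw [sum_mul]; push_cast; exact sum_congr rfl fun n _ => by ring
    simp only [succ_succ, add_mul, sum_add_distrib, zero_left, pow_zero]
    linear_combination -hshift - hmul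

end esymmInvSq

noncomputable def multipleZetaTwo (n : ℕ) : ℝ := ⨆ N, esymmInvSq n N

theorem tendsto_esymmInvSq (n : ℕ) :
    Tendsto (esymmInvSq n) atTop (𝓝 (multipleZetaTwo n)) :=
  tendsto_atTop_ciSup (esymmInvSq.monotone n) ⟨2 ^ n, Set.forall_mem_range.2 (esymmInvSq.le_two_pow n)⟩

theorem multipleZetaTwo_le_two_pow (n : ℕ) : multipleZetaTwo n ≤ 2 ^ n :=
  ciSup_le (esymmInvSq.le_two_pow n)

theorem multipleZetaTwo_nonneg (n : ℕ) : 0 ≤ multipleZetaTwo n :=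
  ge_of_tendsto' (tendsto_esymmInvSq n) (esymmInvSq.nonneg n)

theorem hasSum_esymmInvSq_div_sq (n : ℕ) :
    HasSum (fun m : ℕ => esymmInvSq n (m - 1) / (m : ℝ) ^ 2) (multipleZetaTwo (n + 1)) := by
  rw [hasSum_iff_tendsto_nat_of_nonneg fun m => div_nonneg (esymmInvSq.nonneg _ _) (sq_nonneg _)]
  refine (tendsto_add_atTop_iff_nat 1).mp ((tendsto_esymmInvSq (n + 1)).congr fun N => ?_)
  rw [sum_range_succ', esymmInvSq.succ_left, ← Ico_add_one_right_eq_Icc, sum_Ico_eq_sum_range]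
  simp [add_comm]

theorem tendsto_prod_one_add_div_sq {u : ℝ} (hu : 2 * |u| < 1) :
    Tendsto (fun N : ℕ => ∏ k ∈ Icc 1 N, (1 + u / (k : ℝ) ^ 2)) atTop
      (𝓝 (∑' n, multipleZetaTwo n * u ^ n)) := by
  have hsum : Summable fun n => (2 * |u|) ^ n := summable_geometric_of_lt_one (by positivity) hu
  have h := tendsto_tsum_of_dominated_convergence (f := fun N n => esymmInvSq n N * u ^ n) hsum
    (fun n => (tendsto_esymmInvSq n).mul_const _) (Eventually.of_forall fun N n => ?_)
  · refine h.congr fun N => ?_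
    rw [esymmInvSq.prod_one_add_div_sq, tsum_eq_sum fun n hn => ?_]
    rw [esymmInvSq.eq_zero_of_lt (by simpa using hn), zero_mul]
  · rw [norm_mul, norm_pow, Real.norm_of_nonneg (esymmInvSq.nonneg _ _), Real.norm_eq_abs, mul_pow]
    gcongr
    exact esymmInvSq.le_two_pow n N

theorem tendsto_prod_one_sub_sq_div_sq {x : ℝ} (hx : x ≠ 0) :
    Tendsto (fun N : ℕ => ∏ k ∈ Icc 1 N, (1 - x ^ 2 / (k : ℝ) ^ 2)) atTop
      (𝓝 (sin (π * x) / (π * x))) := by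
  refine ((Real.tendsto_euler_sin_prod x).div_const (π * x)).congr fun N => ?_
  rw [mul_div_cancel_left₀ _ (mul_ne_zero pi_ne_zero hx), ← Ico_add_one_right_eq_Icc,
    prod_Ico_eq_prod_range]
  simp [add_comm]

theorem hasSum_sin_div {x : ℝ} (hx : x ≠ 0) :
    HasSum (fun n : ℕ => π ^ (2 * n) / (2 * n + 1)! * (-x ^ 2) ^ n) (sin (π * x) / (π * x)) := by
  refine ((Real.hasSum_sin (π * x)).div_const (π * x)).congr_fun fun n => ?_
  field_simp
  ring

theorem multipleZetaTwo_eq (n : ℕ) : multipleZetaTwo n = π ^ (2 * n) / (2 * n + 1)! := by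
  suffices multipleZetaTwo = fun n : ℕ => π ^ (2 * n) / (2 * n + 1)! from congrFun this n
  refine eq_of_frequently_tsum_mul_pow_eq
    (radius_ofScalars_pos_of_norm_le_pow (C := 2) fun n => ?_)
    (radius_ofScalars_pos_of_norm_le_pow (C := π ^ 2) fun n => ?_) ?_
  · rw [norm_of_nonneg (multipleZetaTwo_nonneg n)]
    exact multipleZetaTwo_le_two_pow n
  · rw [norm_of_nonneg (by positivity), ← pow_mul]
    exact div_le_self (by positivity) (by exact_mod_cast (2 * n + 1).factorial_pos)
  refine (Eventually.frequently ?_).filter_mono (nhdsLT_le_nhdsNE 0)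
  filter_upwards [Ioo_mem_nhdsLT (show (-1 / 2 : ℝ) < 0 by norm_num)] with u ⟨hu₁, hu₂⟩
  obtain ⟨x, hx, rfl⟩ : ∃ x : ℝ, x ≠ 0 ∧ -x ^ 2 = u :=
    ⟨√(-u), (sqrt_pos.2 (by linarith)).ne', by rw [sq_sqrt (by linarith)]; ring⟩
  have hu : 2 * |-x ^ 2| < 1 := by rw [abs_neg, abs_of_nonneg (by positivity)]; linarith
  rw [(hasSum_sin_div hx).tsum_eq]
  refine tendsto_nhds_unique (tendsto_prod_one_add_div_sq hu)
    ((tendsto_prod_one_sub_sq_div_sq hx).congr fun N => ?_)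
  simp only [neg_div, ← sub_eq_add_neg]

theorem iteratedSum_eq_esymmInvSq (m : ℕ) :
    ∑ ℓ₄ ∈ Icc 4 (m - 1), ∑ ℓ₃ ∈ Icc 3 (ℓ₄ - 1), ∑ ℓ₂ ∈ Icc 2 (ℓ₃ - 1), ∑ ℓ₁ ∈ Icc 1 (ℓ₂ - 1),
        1 / ((ℓ₁ : ℝ) ^ 2 * (ℓ₂ : ℝ) ^ 2 * (ℓ₃ : ℝ) ^ 2 * (ℓ₄ : ℝ) ^ 2 * (m : ℝ) ^ 2) =
      esymmInvSq 4 (m - 1) / (m : ℝ) ^ 2 := by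
  have h₁ (M : ℕ) : ∑ ℓ ∈ Icc 1 M, 1 / (ℓ : ℝ) ^ 2 = esymmInvSq 1 M := rfl
  simp only [← div_div, ← sum_div, h₁, esymmInvSq.sum_Icc_div_sq]

theorem stmt_10 :
    Summable (fun ℓ₅ : {m : ℕ // 5 ≤ m} =>
        ∑ ℓ₄ ∈ Finset.Icc 4 ((ℓ₅ : ℕ) - 1), ∑ ℓ₃ ∈ Finset.Icc 3 (ℓ₄ - 1),
          ∑ ℓ₂ ∈ Finset.Icc 2 (ℓ₃ - 1), ∑ ℓ₁ ∈ Finset.Icc 1 (ℓ₂ - 1),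
            1 / ((ℓ₁ : ℝ) ^ 2 * (ℓ₂ : ℝ) ^ 2 * (ℓ₃ : ℝ) ^ 2 * (ℓ₄ : ℝ) ^ 2 *
              ((ℓ₅ : ℕ) : ℝ) ^ 2)) ∧
      ∑' ℓ₅ : {m : ℕ // 5 ≤ m},
          ∑ ℓ₄ ∈ Finset.Icc 4 ((ℓ₅ : ℕ) - 1), ∑ ℓ₃ ∈ Finset.Icc 3 (ℓ₄ - 1),
            ∑ ℓ₂ ∈ Finset.Icc 2 (ℓ₃ - 1), ∑ ℓ₁ ∈ Finset.Icc 1 (ℓ₂ - 1),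
              1 / ((ℓ₁ : ℝ) ^ 2 * (ℓ₂ : ℝ) ^ 2 * (ℓ₃ : ℝ) ^ 2 * (ℓ₄ : ℝ) ^ 2 *
                ((ℓ₅ : ℕ) : ℝ) ^ 2) =
        π ^ 10 / (Nat.factorial 11 : ℝ) := by
  have hsupp : Function.support (fun m : ℕ => esymmInvSq 4 (m - 1) / (m : ℝ) ^ 2) ⊆ {m | 5 ≤ m} :=
    Function.support_subset_iff'.2 fun m (hm : ¬5 ≤ m) =>
      div_eq_zero_iff.2 (.inl (esymmInvSq.eq_zero_of_lt (by omega)))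
  have hζ : HasSum (fun ℓ₅ : {m : ℕ // 5 ≤ m} => esymmInvSq 4 (ℓ₅ - 1) / ((ℓ₅ : ℕ) : ℝ) ^ 2)
      (π ^ 10 / (Nat.factorial 11 : ℝ)) := by
    have hsub := (hasSum_subtype_iff_of_support_subset hsupp).2 (hasSum_esymmInvSq_div_sq 4)
    rwa [multipleZetaTwo_eq] at hsub
  simp only [iteratedSum_eq_esymmInvSq]
  exact ⟨hζ.summable, hζ.tsum_eq⟩
end

section
/- The iterated sum Σ_{ℓ_6 = 6}^{∞} ( Σ_{ℓ_5 = 5}^{ℓ_6 - 1} ( Σ_{ℓ_4 = 4}^{ℓ_5 - 1} ( Σ_{ℓ_3 = 3}^{ℓ_4 - 1} ( Σ_{ℓ_2 = 2}^{ℓ_3 - 1} ( Σ_{ℓ_1 = 1}^{ℓ_2 - 1} 1/(ℓ_1² · ℓ_2² · ℓ_3² · ℓ_4² · ℓ_5² · ℓ_6²) ) ) ) ) ) converges and equals π^{12} / 13!. -/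
open Real Filter Finset

/- Bernoulli number values -/
lemma bb5 : bernoulli' 5 = 0 := by
  have h := sum_bernoulli' 6
  simp only [Finset.sum_range_succ, bernoulli'_zero, bernoulli'_one, bernoulli'_two,
    bernoulli'_three, bernoulli'_four] at h
  norm_num [Nat.choose] at h; linarith

lemma bb6 : bernoulli' 6 = 1/42 := by
  have h := sum_bernoulli' 7
  simp only [Finset.sum_range_succ, bernoulli'_zero, bernoulli'_one, bernoulli'_two,
    bernoulli'_three, bernoulli'_four, bb5] at h
  norm_num [Nat.choose] at h; linarith

lemma bb7 : bernoulli' 7 = 0 := by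
  have h := sum_bernoulli' 8
  simp only [Finset.sum_range_succ, bernoulli'_zero, bernoulli'_one, bernoulli'_two,
    bernoulli'_three, bernoulli'_four, bb5, bb6] at h
  norm_num [Nat.choose] at h; linarith

lemma bb8 : bernoulli' 8 = -1/30 := by
  have h := sum_bernoulli' 9
  simp only [Finset.sum_range_succ, bernoulli'_zero, bernoulli'_one, bernoulli'_two,
    bernoulli'_three, bernoulli'_four, bb5, bb6, bb7] at h
  norm_num [Nat.choose] at h; linarith

lemma bb9 : bernoulli' 9 = 0 := by
  have h := sum_bernoulli' 10
  simp only [Finset.sum_range_succ, bernoulli'_zero, bernoulli'_one, bernoulli'_two,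
    bernoulli'_three, bernoulli'_four, bb5, bb6, bb7, bb8] at h
  norm_num [Nat.choose] at h; linarith

lemma bb10 : bernoulli' 10 = 5/66 := by
  have h := sum_bernoulli' 11
  simp only [Finset.sum_range_succ, bernoulli'_zero, bernoulli'_one, bernoulli'_two,
    bernoulli'_three, bernoulli'_four, bb5, bb6, bb7, bb8, bb9] at h
  norm_num [Nat.choose] at h; linarith

lemma bb11 : bernoulli' 11 = 0 := by
  have h := sum_bernoulli' 12
  simp only [Finset.sum_range_succ, bernoulli'_zero, bernoulli'_one, bernoulli'_two,
    bernoulli'_three, bernoulli'_four, bb5, bb6, bb7, bb8, bb9, bb10] at h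
  norm_num [Nat.choose] at h; linarith

lemma bb12 : bernoulli' 12 = -691/2730 := by
  have h := sum_bernoulli' 13
  simp only [Finset.sum_range_succ, bernoulli'_zero, bernoulli'_one, bernoulli'_two,
    bernoulli'_three, bernoulli'_four, bb5, bb6, bb7, bb8, bb9, bb10, bb11] at h
  norm_num [Nat.choose] at h; linarith

/- Zeta values -/
lemma ZZ1 : HasSum (fun n : ℕ => 1 / (n : ℝ) ^ (2*1)) ((1/6) * π ^ (2*1)) := by
  convert hasSum_zeta_nat (one_ne_zero) using 1
  rw [bernoulli_eq_bernoulli'_of_ne_one (by norm_num)]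
  norm_num [bernoulli'_two, Nat.factorial]
  try ring

lemma ZZ2 : HasSum (fun n : ℕ => 1 / (n : ℝ) ^ (2*2)) ((1/90) * π ^ (2*2)) := by
  convert hasSum_zeta_nat (two_ne_zero) using 1
  rw [bernoulli_eq_bernoulli'_of_ne_one (by norm_num)]
  norm_num [bernoulli'_four, Nat.factorial]
  try ring

lemma ZZ3 : HasSum (fun n : ℕ => 1 / (n : ℝ) ^ (2*3)) ((1/945) * π ^ (2*3)) := by
  convert hasSum_zeta_nat (three_ne_zero) using 1
  rw [bernoulli_eq_bernoulli'_of_ne_one (by norm_num)]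
  norm_num [bb6, Nat.factorial]
  try ring

lemma ZZ4 : HasSum (fun n : ℕ => 1 / (n : ℝ) ^ (2*4)) ((1/9450) * π ^ (2*4)) := by
  convert hasSum_zeta_nat (by norm_num : (4:ℕ) ≠ 0) using 1
  rw [bernoulli_eq_bernoulli'_of_ne_one (by norm_num)]
  norm_num [bb8, Nat.factorial]
  try ring

lemma ZZ5 : HasSum (fun n : ℕ => 1 / (n : ℝ) ^ (2*5)) ((1/93555) * π ^ (2*5)) := by
  convert hasSum_zeta_nat (by norm_num : (5:ℕ) ≠ 0) using 1
  rw [bernoulli_eq_bernoulli'_of_ne_one (by norm_num)]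
  norm_num [bb10, Nat.factorial]
  try ring

lemma ZZ6 : HasSum (fun n : ℕ => 1 / (n : ℝ) ^ (2*6)) ((691/638512875) * π ^ (2*6)) := by
  convert hasSum_zeta_nat (by norm_num : (6:ℕ) ≠ 0) using 1
  rw [bernoulli_eq_bernoulli'_of_ne_one (by norm_num)]
  norm_num [bb12, Nat.factorial]
  try ring

/- elementary symmetric partial sums -/
noncomputable def ff (n : ℕ) : ℝ := 1 / (n : ℝ) ^ 2

noncomputable def ee : ℕ → ℕ → ℝ
  | 0, _ => 1
  | (k+1), N => ∑ m ∈ Finset.Icc (k+1) N, ff m * ee k (m-1)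

noncomputable def pp (i N : ℕ) : ℝ := ∑ m ∈ Finset.Icc 1 N, ff m ^ i

lemma ff_nonneg (n : ℕ) : 0 ≤ ff n := by unfold ff; positivity

lemma ee_zero (N : ℕ) : ee 0 N = 1 := rfl
lemma ee_one (N : ℕ) : ee 1 N = ∑ m ∈ Finset.Icc 1 N, ff m * ee 0 (m-1) := rfl
lemma ee_two (N : ℕ) : ee 2 N = ∑ m ∈ Finset.Icc 2 N, ff m * ee 1 (m-1) := rfl
lemma ee_three (N : ℕ) : ee 3 N = ∑ m ∈ Finset.Icc 3 N, ff m * ee 2 (m-1) := rfl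
lemma ee_four (N : ℕ) : ee 4 N = ∑ m ∈ Finset.Icc 4 N, ff m * ee 3 (m-1) := rfl
lemma ee_five (N : ℕ) : ee 5 N = ∑ m ∈ Finset.Icc 5 N, ff m * ee 4 (m-1) := rfl
lemma ee_six (N : ℕ) : ee 6 N = ∑ m ∈ Finset.Icc 6 N, ff m * ee 5 (m-1) := rfl

lemma ee_nonneg (k : ℕ) : ∀ N, 0 ≤ ee k N := by
  induction k with
  | zero => intro N; rw [ee_zero]; norm_num
  | succ k ih =>
    intro N
    show 0 ≤ ∑ m ∈ Finset.Icc (k+1) N, ff m * ee k (m-1)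
    exact Finset.sum_nonneg fun m _ => mul_nonneg (ff_nonneg m) (ih (m-1))

lemma hee (k N : ℕ) : ee (k+1) (N+1) = ee (k+1) N + ff (N+1) * ee k N := by
  by_cases h : k ≤ N
  · show (∑ m ∈ Finset.Icc (k+1) (N+1), ff m * ee k (m-1)) = _
    rw [Finset.sum_Icc_succ_top (by omega)]
    simp [Nat.add_sub_cancel]
    rfl
  · have h1 : Finset.Icc (k+1) (N+1) = ∅ := Finset.Icc_eq_empty (by omega)
    have h2 : Finset.Icc (k+1) N = ∅ := Finset.Icc_eq_empty (by omega)
    have h3 : ee k N = 0 := by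
      cases k with
      | zero => omega
      | succ j =>
        show (∑ m ∈ Finset.Icc (j+1) N, ff m * ee j (m-1)) = 0
        rw [Finset.Icc_eq_empty (by omega)]; simp
    show (∑ m ∈ Finset.Icc (k+1) (N+1), ff m * ee k (m-1)) = (∑ m ∈ Finset.Icc (k+1) N, ff m * ee k (m-1)) + ff (N+1) * ee k N
    rw [h1, h2, h3]; simp

lemma hpp (i N : ℕ) : pp i (N+1) = pp i N + ff (N+1) ^ i := by
  unfold pp
  rw [Finset.sum_Icc_succ_top (by omega)]

lemma newton (N : ℕ) :
    (ee 1 N = pp 1 N) ∧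
    (2 * ee 2 N = pp 1 N * ee 1 N - pp 2 N) ∧
    (3 * ee 3 N = pp 1 N * ee 2 N - pp 2 N * ee 1 N + pp 3 N) ∧
    (4 * ee 4 N = pp 1 N * ee 3 N - pp 2 N * ee 2 N + pp 3 N * ee 1 N - pp 4 N) ∧
    (5 * ee 5 N = pp 1 N * ee 4 N - pp 2 N * ee 3 N + pp 3 N * ee 2 N - pp 4 N * ee 1 N + pp 5 N) ∧
    (6 * ee 6 N = pp 1 N * ee 5 N - pp 2 N * ee 4 N + pp 3 N * ee 3 N - pp 4 N * ee 2 N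
      + pp 5 N * ee 1 N - pp 6 N) := by
  induction N with
  | zero =>
    have hI : Finset.Icc 1 0 = (∅ : Finset ℕ) := Finset.Icc_eq_empty (by omega)
    refine ⟨?_, ?_, ?_, ?_, ?_, ?_⟩ <;>
      simp [ee_one, ee_two, ee_three, ee_four, ee_five, ee_six, pp,
        Finset.Icc_eq_empty (show ¬ (1:ℕ) ≤ 0 by omega),
        Finset.Icc_eq_empty (show ¬ (2:ℕ) ≤ 0 by omega),
        Finset.Icc_eq_empty (show ¬ (3:ℕ) ≤ 0 by omega),
        Finset.Icc_eq_empty (show ¬ (4:ℕ) ≤ 0 by omega),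
        Finset.Icc_eq_empty (show ¬ (5:ℕ) ≤ 0 by omega),
        Finset.Icc_eq_empty (show ¬ (6:ℕ) ≤ 0 by omega)]
  | succ N ih =>
    obtain ⟨h1, h2, h3, h4, h5, h6⟩ := ih
    have e1 : ee 1 (N+1) = ee 1 N + ff (N+1) := by
      have := hee 0 N; rw [ee_zero] at this; simpa using this
    have e2 : ee 2 (N+1) = ee 2 N + ff (N+1) * ee 1 N := hee 1 N
    have e3 : ee 3 (N+1) = ee 3 N + ff (N+1) * ee 2 N := hee 2 N
    have e4 : ee 4 (N+1) = ee 4 N + ff (N+1) * ee 3 N := hee 3 N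
    have e5 : ee 5 (N+1) = ee 5 N + ff (N+1) * ee 4 N := hee 4 N
    have e6 : ee 6 (N+1) = ee 6 N + ff (N+1) * ee 5 N := hee 5 N
    have q1 := hpp 1 N
    have q2 := hpp 2 N
    have q3 := hpp 3 N
    have q4 := hpp 4 N
    have q5 := hpp 5 N
    have q6 := hpp 6 N
    refine ⟨?_, ?_, ?_, ?_, ?_, ?_⟩
    · rw [e1, q1]; linear_combination h1
    · rw [e2, e1, q1, q2]; linear_combination h2 + ff (N+1) * h1
    · rw [e3, e2, e1, q1, q2, q3]; linear_combination h3 + ff (N+1) * h2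
    · rw [e4, e3, e2, e1, q1, q2, q3, q4]; linear_combination h4 + ff (N+1) * h3
    · rw [e5, e4, e3, e2, e1, q1, q2, q3, q4, q5]; linear_combination h5 + ff (N+1) * h4
    · rw [e6, e5, e4, e3, e2, e1, q1, q2, q3, q4, q5, q6]
      linear_combination h6 + ff (N+1) * h5

lemma pp_tendsto {i : ℕ} (hi : i ≠ 0) {Z : ℝ}
    (hZ : HasSum (fun n : ℕ => 1 / (n : ℝ) ^ (2*i)) Z) :
    Tendsto (fun N => pp i N) atTop (nhds Z) := by
  have h1 : ∀ N, pp i N = ∑ m ∈ Finset.range (N+1), 1 / (m : ℝ) ^ (2*i) := by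
    intro N
    have hr : Finset.range (N+1) = insert 0 (Finset.Icc 1 N) := by
      ext x; simp [Nat.lt_succ_iff]; omega
    rw [hr, Finset.sum_insert (by simp)]
    have h0 : 1 / ((0:ℕ) : ℝ) ^ (2*i) = 0 := by
      rw [Nat.cast_zero, zero_pow (by omega : 2*i ≠ 0)]; simp
    rw [h0, zero_add]
    unfold pp
    refine Finset.sum_congr rfl fun m _ => ?_
    unfold ff
    rw [div_pow, one_pow, ← pow_mul]
  simp only [h1]
  exact hZ.tendsto_sum_nat.comp (tendsto_add_atTop_nat 1)

lemma T1 : Tendsto (fun N => ee 1 N) atTop (nhds (π^2 / 6)) := by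
  have h := pp_tendsto one_ne_zero ZZ1
  have heq : ∀ N, ee 1 N = pp 1 N := fun N => (newton N).1
  rw [show (1/6 : ℝ) * π ^ (2*1) = π^2/6 by ring] at h
  exact h.congr fun N => (heq N).symm

lemma T2 : Tendsto (fun N => ee 2 N) atTop (nhds (π^4 / 120)) := by
  have p1 := pp_tendsto one_ne_zero ZZ1
  have p2 := pp_tendsto two_ne_zero ZZ2
  have heq : ∀ N, ee 2 N = (pp 1 N * ee 1 N - pp 2 N) / 2 := by
    intro N; have := (newton N).2.1; linarith
  have h := ((p1.mul T1).sub p2).div_const 2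
  rw [show ((1/6 : ℝ) * π ^ (2*1) * (π^2/6) - (1/90) * π ^ (2*2)) / 2 = π^4/120 by ring] at h
  exact h.congr fun N => (heq N).symm

lemma T3 : Tendsto (fun N => ee 3 N) atTop (nhds (π^6 / 5040)) := by
  have p1 := pp_tendsto one_ne_zero ZZ1
  have p2 := pp_tendsto two_ne_zero ZZ2
  have p3 := pp_tendsto three_ne_zero ZZ3
  have heq : ∀ N, ee 3 N = (pp 1 N * ee 2 N - pp 2 N * ee 1 N + pp 3 N) / 3 := by
    intro N; have := (newton N).2.2.1; linarith
  have h := (((p1.mul T2).sub (p2.mul T1)).add p3).div_const 3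
  rw [show ((1/6 : ℝ) * π ^ (2*1) * (π^4/120) - (1/90) * π ^ (2*2) * (π^2/6)
      + (1/945) * π ^ (2*3)) / 3 = π^6/5040 by ring] at h
  exact h.congr fun N => (heq N).symm

lemma T4 : Tendsto (fun N => ee 4 N) atTop (nhds (π^8 / 362880)) := by
  have p1 := pp_tendsto one_ne_zero ZZ1
  have p2 := pp_tendsto two_ne_zero ZZ2
  have p3 := pp_tendsto three_ne_zero ZZ3
  have p4 := pp_tendsto (by norm_num : (4:ℕ) ≠ 0) ZZ4
  have heq : ∀ N, ee 4 N = (pp 1 N * ee 3 N - pp 2 N * ee 2 N + pp 3 N * ee 1 N - pp 4 N) / 4 := by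
    intro N; have := (newton N).2.2.2.1; linarith
  have h := ((((p1.mul T3).sub (p2.mul T2)).add (p3.mul T1)).sub p4).div_const 4
  rw [show ((1/6 : ℝ) * π ^ (2*1) * (π^6/5040) - (1/90) * π ^ (2*2) * (π^4/120)
      + (1/945) * π ^ (2*3) * (π^2/6) - (1/9450) * π ^ (2*4)) / 4 = π^8/362880 by ring] at h
  exact h.congr fun N => (heq N).symm

lemma T5 : Tendsto (fun N => ee 5 N) atTop (nhds (π^10 / 39916800)) := by
  have p1 := pp_tendsto one_ne_zero ZZ1
  have p2 := pp_tendsto two_ne_zero ZZ2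
  have p3 := pp_tendsto three_ne_zero ZZ3
  have p4 := pp_tendsto (by norm_num : (4:ℕ) ≠ 0) ZZ4
  have p5 := pp_tendsto (by norm_num : (5:ℕ) ≠ 0) ZZ5
  have heq : ∀ N, ee 5 N = (pp 1 N * ee 4 N - pp 2 N * ee 3 N + pp 3 N * ee 2 N
      - pp 4 N * ee 1 N + pp 5 N) / 5 := by
    intro N; have := (newton N).2.2.2.2.1; linarith
  have h := (((((p1.mul T4).sub (p2.mul T3)).add (p3.mul T2)).sub (p4.mul T1)).add p5).div_const 5
  rw [show ((1/6 : ℝ) * π ^ (2*1) * (π^8/362880) - (1/90) * π ^ (2*2) * (π^6/5040)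
      + (1/945) * π ^ (2*3) * (π^4/120) - (1/9450) * π ^ (2*4) * (π^2/6)
      + (1/93555) * π ^ (2*5)) / 5 = π^10/39916800 by ring] at h
  exact h.congr fun N => (heq N).symm

lemma T6 : Tendsto (fun N => ee 6 N) atTop (nhds (π^12 / 6227020800)) := by
  have p1 := pp_tendsto one_ne_zero ZZ1
  have p2 := pp_tendsto two_ne_zero ZZ2
  have p3 := pp_tendsto three_ne_zero ZZ3
  have p4 := pp_tendsto (by norm_num : (4:ℕ) ≠ 0) ZZ4
  have p5 := pp_tendsto (by norm_num : (5:ℕ) ≠ 0) ZZ5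
  have p6 := pp_tendsto (by norm_num : (6:ℕ) ≠ 0) ZZ6
  have heq : ∀ N, ee 6 N = (pp 1 N * ee 5 N - pp 2 N * ee 4 N + pp 3 N * ee 3 N
      - pp 4 N * ee 2 N + pp 5 N * ee 1 N - pp 6 N) / 6 := by
    intro N; have := (newton N).2.2.2.2.2; linarith
  have h := ((((((p1.mul T5).sub (p2.mul T4)).add (p3.mul T3)).sub (p4.mul T2)).add
    (p5.mul T1)).sub p6).div_const 6
  rw [show ((1/6 : ℝ) * π ^ (2*1) * (π^10/39916800) - (1/90) * π ^ (2*2) * (π^8/362880)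
      + (1/945) * π ^ (2*3) * (π^6/5040) - (1/9450) * π ^ (2*4) * (π^4/120)
      + (1/93555) * π ^ (2*5) * (π^2/6) - (691/638512875) * π ^ (2*6)) / 6
      = π^12/6227020800 by ring] at h
  exact h.congr fun N => (heq N).symm

noncomputable def FF (L : ℕ) : ℝ :=
  ∑ ℓ₅ ∈ Finset.Icc 5 (L - 1), ∑ ℓ₄ ∈ Finset.Icc 4 (ℓ₅ - 1),
    ∑ ℓ₃ ∈ Finset.Icc 3 (ℓ₄ - 1), ∑ ℓ₂ ∈ Finset.Icc 2 (ℓ₃ - 1),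
      ∑ ℓ₁ ∈ Finset.Icc 1 (ℓ₂ - 1),
        1 / ((ℓ₁ : ℝ) ^ 2 * (ℓ₂ : ℝ) ^ 2 * (ℓ₃ : ℝ) ^ 2 * (ℓ₄ : ℝ) ^ 2 *
          (ℓ₅ : ℝ) ^ 2 * (L : ℝ) ^ 2)

lemma bridge (L : ℕ) : FF L = ff L * ee 5 (L-1) := by
  unfold FF
  rw [ee_five, Finset.mul_sum]
  refine Finset.sum_congr rfl fun ℓ₅ _ => ?_
  rw [ee_four, Finset.mul_sum, Finset.mul_sum]
  refine Finset.sum_congr rfl fun ℓ₄ _ => ?_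
  rw [ee_three, Finset.mul_sum, Finset.mul_sum, Finset.mul_sum]
  refine Finset.sum_congr rfl fun ℓ₃ _ => ?_
  rw [ee_two, Finset.mul_sum, Finset.mul_sum, Finset.mul_sum, Finset.mul_sum]
  refine Finset.sum_congr rfl fun ℓ₂ _ => ?_
  rw [ee_one, Finset.mul_sum, Finset.mul_sum, Finset.mul_sum, Finset.mul_sum, Finset.mul_sum]
  refine Finset.sum_congr rfl fun ℓ₁ _ => ?_
  rw [ee_zero]
  unfold ff
  rw [one_div, one_div, one_div, one_div, one_div, one_div, one_div,
    mul_inv_rev, mul_inv_rev, mul_inv_rev, mul_inv_rev, mul_inv_rev]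
  ring

lemma hpartial (N : ℕ) :
    ∑ m ∈ Finset.range N, Set.indicator {n : ℕ | 6 ≤ n} FF m = ee 6 (N-1) := by
  have hfil : (Finset.range N).filter (fun m => m ∈ {n : ℕ | 6 ≤ n}) = Finset.Icc 6 (N-1) := by
    ext x; simp only [Finset.mem_filter, Finset.mem_range, Set.mem_setOf_eq, Finset.mem_Icc]
    omega
  rw [Finset.sum_indicator_eq_sum_filter, hfil, ee_six]
  exact Finset.sum_congr rfl fun m _ => bridge m

set_option maxHeartbeats 2000000 in
theorem stmt_11 :
    Summable (fun ℓ₆ : {m : ℕ // 6 ≤ m} =>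
        ∑ ℓ₅ ∈ Finset.Icc 5 ((ℓ₆ : ℕ) - 1), ∑ ℓ₄ ∈ Finset.Icc 4 (ℓ₅ - 1),
          ∑ ℓ₃ ∈ Finset.Icc 3 (ℓ₄ - 1), ∑ ℓ₂ ∈ Finset.Icc 2 (ℓ₃ - 1),
            ∑ ℓ₁ ∈ Finset.Icc 1 (ℓ₂ - 1),
              1 / ((ℓ₁ : ℝ) ^ 2 * (ℓ₂ : ℝ) ^ 2 * (ℓ₃ : ℝ) ^ 2 * (ℓ₄ : ℝ) ^ 2 *
                (ℓ₅ : ℝ) ^ 2 * ((ℓ₆ : ℕ) : ℝ) ^ 2)) ∧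
      ∑' ℓ₆ : {m : ℕ // 6 ≤ m},
          ∑ ℓ₅ ∈ Finset.Icc 5 ((ℓ₆ : ℕ) - 1), ∑ ℓ₄ ∈ Finset.Icc 4 (ℓ₅ - 1),
            ∑ ℓ₃ ∈ Finset.Icc 3 (ℓ₄ - 1), ∑ ℓ₂ ∈ Finset.Icc 2 (ℓ₃ - 1),
              ∑ ℓ₁ ∈ Finset.Icc 1 (ℓ₂ - 1),
                1 / ((ℓ₁ : ℝ) ^ 2 * (ℓ₂ : ℝ) ^ 2 * (ℓ₃ : ℝ) ^ 2 * (ℓ₄ : ℝ) ^ 2 *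
                  (ℓ₅ : ℝ) ^ 2 * ((ℓ₆ : ℕ) : ℝ) ^ 2) =
        π ^ 12 / (Nat.factorial 13 : ℝ) := by
  have hmono : Monotone (fun N => ee 6 N) := by
    refine monotone_nat_of_le_succ fun N => ?_
    rw [hee 5 N]
    have := mul_nonneg (ff_nonneg (N+1)) (ee_nonneg 5 N)
    linarith
  have hT : Tendsto (fun N => ∑ m ∈ Finset.range N, Set.indicator {n : ℕ | 6 ≤ n} FF m)
      atTop (nhds (π^12 / 6227020800)) := by
    simp only [hpartial]
    exact T6.comp (tendsto_sub_atTop_nat 1)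
  have hnn : ∀ m, 0 ≤ Set.indicator {n : ℕ | 6 ≤ n} FF m := by
    intro m
    refine Set.indicator_nonneg (fun x _ => ?_) m
    rw [bridge]
    exact mul_nonneg (ff_nonneg x) (ee_nonneg 5 (x-1))
  have hb : ∀ N, ∑ m ∈ Finset.range N, Set.indicator {n : ℕ | 6 ≤ n} FF m
      ≤ π^12 / 6227020800 := by
    intro N
    rw [hpartial]
    exact hmono.ge_of_tendsto T6 (N-1)
  have hsum : Summable (Set.indicator {n : ℕ | 6 ≤ n} FF) := summable_of_sum_range_le hnn hb
  have hA : HasSum (Set.indicator {n : ℕ | 6 ≤ n} FF) (π^12 / 6227020800) :=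
    (hsum.hasSum_iff_tendsto_nat).mpr hT
  have hS := (summable_subtype_iff_indicator (f := FF) (s := {n : ℕ | 6 ≤ n})).mpr hsum
  have htt := tsum_subtype (f := FF) ({n : ℕ | 6 ≤ n})
  rw [hA.tsum_eq] at htt
  have ht2 : ∑' ℓ₆ : {m : ℕ // 6 ≤ m}, FF (ℓ₆ : ℕ) = π ^ 12 / (Nat.factorial 13 : ℝ) := by
    rw [show (Nat.factorial 13 : ℕ) = 6227020800 from by rfl]
    push_cast
    exact htt
  constructor
  · exact hS.congr fun x => rfl
  · exact Eq.trans (tsum_congr fun ℓ₆ => rfl) ht2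
end

section
/- The iterated sum Σ_{ℓ_7 = 7}^{∞} ( Σ_{ℓ_6 = 6}^{ℓ_7 - 1} ( Σ_{ℓ_5 = 5}^{ℓ_6 - 1} ( Σ_{ℓ_4 = 4}^{ℓ_5 - 1} ( Σ_{ℓ_3 = 3}^{ℓ_4 - 1} ( Σ_{ℓ_2 = 2}^{ℓ_3 - 1} ( Σ_{ℓ_1 = 1}^{ℓ_2 - 1} 1/(ℓ_1² · ℓ_2² · ℓ_3² · ℓ_4² · ℓ_5² · ℓ_6² · ℓ_7²) ) ) ) ) ) ) converges and equals π^{14} / 15!. -/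
/-!
Read from the inside out, the inner sums build the elementary symmetric functions
`e_k(N) = e_k(1/1², …, 1/N²)`: the summand over `ℓ₇` is `e_6(ℓ₇ - 1) / ℓ₇²`, so the partial sums of
the series are `e_7(N)`. Newton's identities express `k e_k(N)` through the `e_i(N)`, `i < k`, and
the power sums `p_j(N) → ζ(2j)`; hence `lim e_k(N)` is determined recursively, and it suffices to
check that `π^{2k}/(2k+1)!` (the coefficients of `sin(πx)/(πx) = ∏ (1 - x²/n²)`) satisfy the same
recursion. With Euler's formula for `ζ(2j)` this becomes `∑ᵢ C(2k+1, 2i) 4^i B_{2i} = 2k + 1`,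
which is the vanishing of the Bernoulli polynomial `B_{2k+1}` at `1/2`.
-/

open Finset Filter Topology Real

theorem Multiset.esymm_cons_succ {R : Type*} [CommSemiring R] (a : R) (s : Multiset R) (k : ℕ) :
    (a ::ₘ s).esymm (k + 1) = s.esymm (k + 1) + a * s.esymm k := by
  simp only [Multiset.esymm, Multiset.powersetCard_cons, Multiset.map_add, Multiset.sum_add,
    Multiset.map_map, Function.comp_def, Multiset.prod_cons, Multiset.sum_map_mul_left]

section PartialEsymm

variable {R : Type*} [CommSemiring R] (w : ℕ → R)

/-- `e_k(w 1, …, w N)`: indices start at `1`, like the summation variables `ℓᵢ`. -/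
def partialEsymm (k N : ℕ) : R := ((Multiset.range N).map fun n ↦ w (n + 1)).esymm k

def partialPsum (j N : ℕ) : R := ∑ n ∈ range N, w (n + 1) ^ j

@[simp]
theorem partialEsymm_zero_left (N : ℕ) : partialEsymm w 0 N = 1 := by
  simp [partialEsymm, Multiset.esymm]

theorem partialEsymm_of_lt {k N : ℕ} (h : N < k) : partialEsymm w k N = 0 := by
  rw [partialEsymm, Multiset.esymm, Multiset.powersetCard_eq_empty _ (by simpa using h)]
  simp

theorem partialEsymm_succ_succ (k N : ℕ) :
    partialEsymm w (k + 1) (N + 1) = partialEsymm w (k + 1) N + w (N + 1) * partialEsymm w k N := by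
  simp only [partialEsymm, Multiset.range_succ, Multiset.map_cons, Multiset.esymm_cons_succ]

theorem partialEsymm_succ_eq_sum (k N : ℕ) :
    partialEsymm w (k + 1) N = ∑ n ∈ range N, partialEsymm w k n * w (n + 1) := by
  induction N with
  | zero => exact partialEsymm_of_lt w (Nat.succ_pos k)
  | succ N ih => rw [partialEsymm_succ_succ, ih, sum_range_succ, mul_comm]

theorem sum_Icc_partialEsymm_mul (k m : ℕ) :
    ∑ ℓ ∈ Icc (k + 1) m, partialEsymm w k (ℓ - 1) * w ℓ = partialEsymm w (k + 1) m := by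
  induction m with
  | zero => simp [partialEsymm_of_lt]
  | succ m ih =>
    rcases Nat.lt_or_ge m k with hmk | hkm
    · rw [Icc_eq_empty (by omega), sum_empty, partialEsymm_of_lt w (by omega)]
    · rw [sum_Icc_succ_top (by omega), ih, partialEsymm_succ_succ, Nat.add_sub_cancel, mul_comm]

end PartialEsymm

theorem partialEsymm_nonneg {R : Type*} [CommSemiring R] [PartialOrder R] [IsOrderedRing R]
    {w : ℕ → R} (hw : ∀ n, 0 ≤ w n) (k N : ℕ) : 0 ≤ partialEsymm w k N := by
  induction k generalizing N with
  | zero => simp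
  | succ k ih =>
    rw [partialEsymm_succ_eq_sum]
    exact sum_nonneg fun n _ ↦ mul_nonneg (ih n) (hw _)

theorem mul_partialEsymm_eq_sum {R : Type*} [CommRing R] (w : ℕ → R) (k N : ℕ) :
    (k : R) * partialEsymm w k N = (-1) ^ (k + 1) * ∑ a ∈ antidiagonal k with a.1 < k,
      (-1) ^ a.1 * partialEsymm w a.1 N * partialPsum w a.2 N := by
  set x : range N → R := fun n ↦ w (n + 1)
  have hesymm (j : ℕ) : MvPolynomial.aeval x (MvPolynomial.esymm (range N) R j) =
      partialEsymm w j N := by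
    rw [MvPolynomial.aeval_esymm_eq_multiset_esymm, univ_eq_attach, attach_val]
    exact congrArg (Multiset.esymm · j) (Multiset.attach_map_val' (range N).val fun n ↦ w (n + 1))
  have hpsum (j : ℕ) : MvPolynomial.aeval x (MvPolynomial.psum (range N) R j) =
      partialPsum w j N := by
    simp [x, MvPolynomial.psum, partialPsum, univ_eq_attach,
      sum_attach (range N) fun n ↦ w (n + 1) ^ j]
  simpa only [map_mul, map_natCast, map_pow, map_neg, map_one, map_sum, hesymm, hpsum] using
    congrArg (MvPolynomial.aeval x) (MvPolynomial.mul_esymm_eq_sum (range N) R k)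

theorem tendsto_partialEsymm {K : Type*} [Field K] [CharZero K] [TopologicalSpace K]
    [IsTopologicalRing K] {w E z : ℕ → K}
    (hz : ∀ j ≠ 0, Tendsto (partialPsum w j) atTop (𝓝 (z j))) (hE₀ : E 0 = 1)
    (hE : ∀ k : ℕ, (k : K) * E k =
      (-1) ^ (k + 1) * ∑ a ∈ antidiagonal k with a.1 < k, (-1) ^ a.1 * E a.1 * z a.2)
    (k : ℕ) : Tendsto (partialEsymm w k) atTop (𝓝 (E k)) := by
  induction k using Nat.strong_induction_on with
  | _ k ih =>
  rcases Nat.eq_zero_or_pos k with rfl | hk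
  · rw [hE₀]
    exact tendsto_const_nhds.congr fun N ↦ (partialEsymm_zero_left w N).symm
  have hnewton : Tendsto (fun N ↦ (k : K) * partialEsymm w k N) atTop (𝓝 ((k : K) * E k)) := by
    simp_rw [mul_partialEsymm_eq_sum, hE]
    refine tendsto_const_nhds.mul (tendsto_finsetSum _ fun a ha ↦ ?_)
    obtain ⟨hak, hlt⟩ := mem_filter.mp ha
    rw [HasAntidiagonal.mem_antidiagonal] at hak
    exact (tendsto_const_nhds.mul (ih a.1 hlt)).mul (hz a.2 (by omega))
  have hk' : (k : K) ≠ 0 := Nat.cast_ne_zero.mpr hk.ne'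
  simpa [inv_mul_cancel_left₀ hk'] using hnewton.const_mul (k : K)⁻¹

-- Euler's formula for `ζ(2j)`, valid for `j ≠ 0`.
noncomputable def zetaEven (j : ℕ) : ℝ :=
  (-1) ^ (j + 1) * 2 ^ (2 * j - 1) * π ^ (2 * j) * bernoulli (2 * j) / (2 * j).factorial

-- `(-1)^k sincCoeff k` is the coefficient of `x^{2k}` in `sin (π x) / (π x)`.
noncomputable def sincCoeff (k : ℕ) : ℝ := π ^ (2 * k) / (2 * k + 1).factorial

theorem tendsto_partialPsum_inv_sq {j : ℕ} (hj : j ≠ 0) :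
    Tendsto (partialPsum (fun ℓ : ℕ ↦ 1 / (ℓ : ℝ) ^ 2) j) atTop (𝓝 (zetaEven j)) := by
  have h := (hasSum_nat_add_iff' 1).mpr (hasSum_zeta_nat hj)
  rw [zetaEven]
  convert h.tendsto_sum_nat using 2 <;> simp [partialPsum, pow_mul, hj]

theorem sum_range_two_mul {M : Type*} [AddCommMonoid M] (f : ℕ → M) (m : ℕ) :
    ∑ j ∈ range (2 * m), f j = ∑ i ∈ range m, (f (2 * i) + f (2 * i + 1)) := by
  induction m with
  | zero => simp
  | succ m ih =>
    rw [mul_add, mul_one, sum_range_succ, sum_range_succ, sum_range_succ, ih, add_assoc]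

theorem bernoulliFun_eq_sum (n : ℕ) (x : ℝ) :
    bernoulliFun n x = ∑ i ∈ range (n + 1), (bernoulli i : ℝ) * n.choose i * x ^ (n - i) := by
  simp [bernoulliFun, Polynomial.bernoulli]

theorem sum_choose_mul_bernoulli_even (k : ℕ) :
    ∑ i ∈ range (k + 1), ((2 * k + 1).choose (2 * i) : ℝ) * 2 ^ (2 * i) * bernoulli (2 * i) =
      2 * k + 1 := by
  set g : ℕ → ℝ := fun j ↦ ((2 * k + 1).choose j : ℝ) * 2 ^ j * bernoulli j
  have hsum : ∑ j ∈ range (2 * k + 1 + 1), g j = 0 := by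
    have h := congrArg ((2 : ℝ) ^ (2 * k + 1) * ·) (bernoulliFun_eval_half_eq_zero k)
    rw [bernoulliFun_eq_sum, mul_zero, mul_sum] at h
    rw [← h]
    refine sum_congr rfl fun j hj ↦ ?_
    have hjn : j ≤ 2 * k + 1 := Nat.lt_succ_iff.mp (mem_range.mp hj)
    rw [← pow_sub_mul_pow (2 : ℝ) hjn, inv_pow]
    field_simp
    ring
  -- among the odd indices only `B₁ = -1/2` survives
  have hodd : ∑ i ∈ range (k + 1), g (2 * i + 1) = -(2 * k + 1) := by
    rw [sum_eq_single_of_mem 0 (by simp)]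
    · simp only [g, mul_zero, zero_add, Nat.choose_one_right, pow_one, bernoulli_one]
      push_cast
      ring
    · intro i _ hi
      simp [g, bernoulli_eq_zero_of_odd (odd_two_mul_add_one i) (by omega)]
  rw [show 2 * k + 1 + 1 = 2 * (k + 1) by omega, sum_range_two_mul, sum_add_distrib, hodd] at hsum
  linarith

theorem newton_summand_sincCoeff {k j : ℕ} (hj : j < k) :
    (-1) ^ (k + 1) * ((-1) ^ (k - (j + 1)) * sincCoeff (k - (j + 1)) * zetaEven (j + 1)) =
      sincCoeff k * ((2 * k + 1).choose (2 * (j + 1)) * 2 ^ (2 * (j + 1)) *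
        bernoulli (2 * (j + 1)) / 2) := by
  obtain ⟨m, rfl⟩ := Nat.exists_eq_add_of_lt hj
  have hchoose := Nat.choose_mul_factorial_mul_factorial
    (n := 2 * (j + m + 1) + 1) (k := 2 * (j + 1)) (by omega)
  rw [show 2 * (j + m + 1) + 1 - 2 * (j + 1) = 2 * m + 1 by omega] at hchoose
  have hc : ((2 * (j + m + 1) + 1).choose (2 * (j + 1)) : ℝ) ≠ 0 :=
    Nat.cast_ne_zero.mpr (Nat.choose_pos (by omega)).ne'
  have hsign : (-1 : ℝ) ^ (j + m + 1 + 1) * (-1) ^ m * (-1) ^ (j + 1 + 1) = 1 := by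
    rw [← pow_add, ← pow_add]
    exact Even.neg_one_pow ⟨j + m + 2, by ring⟩
  rw [sincCoeff, sincCoeff, zetaEven, show j + m + 1 - (j + 1) = m by omega, ← hchoose,
    show 2 * (j + 1) - 1 = 2 * j + 1 by omega]
  push_cast
  field_simp
  linear_combination
    (π ^ (2 * m) * 2 ^ (2 * j + 1) * π ^ (2 * (j + 1)) * bernoulli (2 * (j + 1)) * 2) * hsign

theorem sincCoeff_newton (k : ℕ) :
    (k : ℝ) * sincCoeff k = (-1) ^ (k + 1) *
      ∑ a ∈ antidiagonal k with a.1 < k, (-1) ^ a.1 * sincCoeff a.1 * zetaEven a.2 := by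
  have hb := sum_choose_mul_bernoulli_even k
  rw [sum_range_succ', mul_zero, Nat.choose_zero_right, pow_zero, bernoulli_zero, Nat.cast_one,
    Rat.cast_one, mul_one, mul_one] at hb
  -- write `a = (k - i, i)`; the condition `a.1 < k` removes exactly `i = 0`
  rw [sum_filter, ← Nat.sum_antidiagonal_swap, Nat.sum_antidiagonal_eq_sum_range_succ_mk,
    sum_range_succ']
  simp only [Prod.swap_prod_mk, Nat.sub_zero, lt_irrefl, if_false, add_zero, mul_sum]
  rw [sum_congr rfl fun j hj ↦ by
      rw [if_pos (by rw [mem_range] at hj; omega), newton_summand_sincCoeff (mem_range.mp hj)],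
    ← mul_sum, ← sum_div]
  linear_combination -(sincCoeff k / 2) * hb

theorem nested_sum_eq (n : ℕ) :
    ∑ ℓ₆ ∈ Icc 6 (n - 1), ∑ ℓ₅ ∈ Icc 5 (ℓ₆ - 1), ∑ ℓ₄ ∈ Icc 4 (ℓ₅ - 1), ∑ ℓ₃ ∈ Icc 3 (ℓ₄ - 1),
      ∑ ℓ₂ ∈ Icc 2 (ℓ₃ - 1), ∑ ℓ₁ ∈ Icc 1 (ℓ₂ - 1),
        1 / ((ℓ₁ : ℝ) ^ 2 * (ℓ₂ : ℝ) ^ 2 * (ℓ₃ : ℝ) ^ 2 * (ℓ₄ : ℝ) ^ 2 * (ℓ₅ : ℝ) ^ 2 *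
          (ℓ₆ : ℝ) ^ 2 * (n : ℝ) ^ 2) =
      partialEsymm (fun ℓ : ℕ ↦ 1 / (ℓ : ℝ) ^ 2) 6 (n - 1) * (1 / (n : ℝ) ^ 2) := by
  have h := sum_Icc_partialEsymm_mul fun ℓ : ℕ ↦ 1 / (ℓ : ℝ) ^ 2
  have h0 := h 0
  simp only [partialEsymm_zero_left, one_mul, zero_add] at h0
  simp only [one_div, mul_inv, ← sum_mul] at h h0 ⊢
  simp only [h0, h]

theorem hasSum_partialEsymm_mul {w : ℕ → ℝ} (hw : ∀ n, 0 ≤ w n) {k : ℕ} {L : ℝ}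
    (h : Tendsto (partialEsymm w (k + 1)) atTop (𝓝 L)) :
    HasSum (fun n ↦ partialEsymm w k n * w (n + 1)) L := by
  rw [hasSum_iff_tendsto_nat_of_nonneg fun n ↦ mul_nonneg (partialEsymm_nonneg hw k n) (hw _)]
  simpa only [← partialEsymm_succ_eq_sum] using h

theorem stmt_12 :
    Summable (fun ℓ₇ : {m : ℕ // 7 ≤ m} =>
        ∑ ℓ₆ ∈ Finset.Icc 6 ((ℓ₇ : ℕ) - 1), ∑ ℓ₅ ∈ Finset.Icc 5 (ℓ₆ - 1),
          ∑ ℓ₄ ∈ Finset.Icc 4 (ℓ₅ - 1), ∑ ℓ₃ ∈ Finset.Icc 3 (ℓ₄ - 1),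
            ∑ ℓ₂ ∈ Finset.Icc 2 (ℓ₃ - 1), ∑ ℓ₁ ∈ Finset.Icc 1 (ℓ₂ - 1),
              1 / ((ℓ₁ : ℝ) ^ 2 * (ℓ₂ : ℝ) ^ 2 * (ℓ₃ : ℝ) ^ 2 * (ℓ₄ : ℝ) ^ 2 *
                (ℓ₅ : ℝ) ^ 2 * (ℓ₆ : ℝ) ^ 2 * ((ℓ₇ : ℕ) : ℝ) ^ 2)) ∧
      ∑' ℓ₇ : {m : ℕ // 7 ≤ m},
          ∑ ℓ₆ ∈ Finset.Icc 6 ((ℓ₇ : ℕ) - 1), ∑ ℓ₅ ∈ Finset.Icc 5 (ℓ₆ - 1),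
            ∑ ℓ₄ ∈ Finset.Icc 4 (ℓ₅ - 1), ∑ ℓ₃ ∈ Finset.Icc 3 (ℓ₄ - 1),
              ∑ ℓ₂ ∈ Finset.Icc 2 (ℓ₃ - 1), ∑ ℓ₁ ∈ Finset.Icc 1 (ℓ₂ - 1),
                1 / ((ℓ₁ : ℝ) ^ 2 * (ℓ₂ : ℝ) ^ 2 * (ℓ₃ : ℝ) ^ 2 * (ℓ₄ : ℝ) ^ 2 *
                  (ℓ₅ : ℝ) ^ 2 * (ℓ₆ : ℝ) ^ 2 * ((ℓ₇ : ℕ) : ℝ) ^ 2) =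
        π ^ 14 / (Nat.factorial 15 : ℝ) := by
  set w : ℕ → ℝ := fun ℓ ↦ 1 / (ℓ : ℝ) ^ 2
  have hlim : Tendsto (partialEsymm w 7) atTop (𝓝 (π ^ 14 / (Nat.factorial 15 : ℝ))) := by
    have h := tendsto_partialEsymm (w := w) (fun j hj ↦ tendsto_partialPsum_inv_sq hj)
      (by simp [sincCoeff]) sincCoeff_newton 7
    simpa [sincCoeff] using h
  have hsum := hasSum_partialEsymm_mul (fun n ↦ by positivity) hlim
  have hsupp : (fun m ↦ partialEsymm w 6 (m - 1) * w m).support ⊆ {m | 7 ≤ m} := by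
    intro m hm
    by_contra h
    rw [Set.mem_ofPred_eq, not_le] at h
    exact hm (by simp only [partialEsymm_of_lt w (show m - 1 < 6 by omega), zero_mul])
  have hsub := (hasSum_subtype_iff_of_support_subset hsupp).mpr
    ((hasSum_nat_add_iff' 1).mp (by simpa [w] using hsum))
  simp_rw [nested_sum_eq]
  exact ⟨hsub.summable, hsub.tsum_eq⟩
end

section
/- For every real number x, sin(πx) = πx · Σ_{n=0}^{∞} (-1)^n · S_n · x^{2n}, where S_0 = 1 and for n ≥ 1, S_n is the sum over all strictly increasing n-tuples of positive integers 1 ≤ ℓ_1 < ℓ_2 < ... < ℓ_n of ∏_{i=1}^{n} 1/ℓ_i². In particular, for x ≠ 0, sin(πx)/(πx) = Σ_{n=0}^{∞} (-1)^n · S_n · x^{2n}. -/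
/-! Expanding the absolutely convergent Euler product `sin (π x) = π x ∏_{j ≥ 1} (1 - x² / j²)`
gives a sum over finite sets `T ⊆ ℕ+` of `∏_{j ∈ T} (-x² / j²)`. Finite sets of cardinality `n`
are exactly the ranges of strictly increasing `n`-tuples, so grouping this sum by cardinality
produces the terms `(-1)ⁿ S n x²ⁿ`. -/

open Real

/-- `S n`: the sum over all strictly increasing `n`-tuples of positive integers
`ℓ 0 < ℓ 1 < ⋯ < ℓ (n-1)` of `∏ i, 1/(ℓ i)²` (the multiple zeta value
`ζ(2,...,2)` with `n` twos). For `n = 0` the index type has a single element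
(the empty tuple) with empty product `1`, so `S 0 = 1`. -/
noncomputable def S (n : ℕ) : ℝ :=
  ∑' ℓ : {f : Fin n → ℕ+ // StrictMono f}, ∏ i : Fin n, 1 / ((ℓ.1 i : ℕ) : ℝ) ^ 2

open Finset

@[simps]
def strictMonoEquivOrderEmbedding {α β : Type*} [LinearOrder α] [Preorder β] :
    {f : α → β // StrictMono f} ≃ (α ↪o β) where
  toFun f := OrderEmbedding.ofStrictMono f.1 f.2
  invFun e := ⟨e, e.strictMono⟩
  left_inv _ := rfl
  right_inv _ := rfl

def sigmaStrictMonoEquivFinset (α : Type*) [LinearOrder α] :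
    (Σ n : ℕ, {f : Fin n → α // StrictMono f}) ≃ Finset α :=
  (Equiv.sigmaCongrRight fun _ =>
    strictMonoEquivOrderEmbedding.trans Set.powersetCard.ofFinEmbEquiv).trans
    Set.powersetCard.prodEquiv

theorem prod_sigmaStrictMonoEquivFinset {α M : Type*} [LinearOrder α] [CommMonoid M]
    (g : α → M) {n : ℕ} (f : {f : Fin n → α // StrictMono f}) :
    ∏ j ∈ sigmaStrictMonoEquivFinset α ⟨n, f⟩, g j = ∏ i, g (f.1 i) := by
  simp [sigmaStrictMonoEquivFinset, Set.powersetCard.ofFinEmbEquiv_apply,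
    Set.powersetCard.val_ofFinEmb]

theorem hasSum_tsum_prod_strictMono_tprod_one_add {α R : Type*} [LinearOrder α]
    [NormedCommRing R] [NormOneClass R] [CompleteSpace R] {w : α → R}
    (hw : Summable fun j => ‖w j‖) :
    HasSum (fun n => ∑' f : {f : Fin n → α // StrictMono f}, ∏ i, w (f.1 i))
      (∏' j, (1 + w j)) := by
  have hprod := summable_finsetProd_of_summable_norm hw
  have h : HasSum ((fun s => ∏ j ∈ s, w j) ∘ sigmaStrictMonoEquivFinset α)
      (∏' j, (1 + w j)) := by
    rw [Equiv.hasSum_iff, tprod_one_add hprod]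
    exact hprod.hasSum
  refine h.sigma fun n => ?_
  have hfiber := h.summable.sigma_factor n
  simp only [Function.comp_apply, prod_sigmaStrictMonoEquivFinset] at hfiber ⊢
  exact hfiber.hasSum

theorem summable_sq_div_pnat_sq (x : ℝ) : Summable fun j : ℕ+ => x ^ 2 / (j : ℝ) ^ 2 :=
  summable_pnat_iff_summable_nat.mpr
    ((Real.summable_nat_pow_inv.mpr one_lt_two).mul_left (x ^ 2))

theorem Real.sin_pi_mul_eq_mul_tprod_pnat (x : ℝ) :
    sin (π * x) = π * x * ∏' j : ℕ+, (1 - x ^ 2 / (j : ℝ) ^ 2) := by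
  have hmult : Multipliable fun j : ℕ+ => 1 - x ^ 2 / (j : ℝ) ^ 2 := by
    simpa only [← sub_eq_add_neg] using
      Real.multipliable_one_add_of_summable (summable_sq_div_pnat_sq x).neg
  have hlim := ((hasProd_pnat_iff_hasProd_succ (f := fun n : ℕ => 1 - x ^ 2 / (n : ℝ) ^ 2)).mp
    hmult.hasProd).tendsto_prod_nat.const_mul (π * x)
  refine tendsto_nhds_unique (tendsto_euler_sin_prod x) (hlim.congr fun N => ?_)
  push_cast
  rfl

theorem tsum_prod_neg_sq_div_sq_eq (x : ℝ) (n : ℕ) :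
    ∑' f : {f : Fin n → ℕ+ // StrictMono f}, ∏ i, -(x ^ 2 / ((f.1 i : ℕ) : ℝ) ^ 2)
      = (-1) ^ n * S n * x ^ (2 * n) := by
  have hfactor : ∀ a : ℝ, -(x ^ 2 / a ^ 2) = -x ^ 2 * (1 / a ^ 2) := fun a => by ring
  simp only [hfactor, prod_mul_distrib, prod_const, card_univ, Fintype.card_fin, tsum_mul_left,
    S]
  ring

theorem stmt_15 (x : ℝ) :
    Summable (fun n : ℕ => (-1) ^ n * S n * x ^ (2 * n)) ∧
      Real.sin (π * x) = π * x * ∑' n : ℕ, (-1) ^ n * S n * x ^ (2 * n) ∧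
      (x ≠ 0 →
        Real.sin (π * x) / (π * x) = ∑' n : ℕ, (-1) ^ n * S n * x ^ (2 * n)) := by
  have hw : Summable fun j : ℕ+ => ‖-(x ^ 2 / (j : ℝ) ^ 2)‖ :=
    (summable_sq_div_pnat_sq x).neg.norm
  have hseries := hasSum_tsum_prod_strictMono_tprod_one_add hw
  simp only [tsum_prod_neg_sq_div_sq_eq, ← sub_eq_add_neg] at hseries
  have hsin := Real.sin_pi_mul_eq_mul_tprod_pnat x
  refine ⟨hseries.summable, by rw [hseries.tsum_eq, hsin], fun hx => ?_⟩
  rw [hseries.tsum_eq, hsin, mul_div_cancel_left₀ _ (mul_ne_zero pi_ne_zero hx)]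
end
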